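/- arXiv:1403.2293 — 2 statements merged into one kernel-verified Lean document; each statement's English description precedes it below -/
import Mathlib

section
/- Let K be a global field, 𝔭 a non-archimedean place of K, and φ : P^1 → P^1 a morphism defined over K with good reduction at 𝔭. Let P ∈ P^1(K) be a periodic point for φ with minimal period n. Then: (i) δ_𝔭(φ^i(P), φ^j(P)) = δ_𝔭(φ^{i+k}(P), φ^{j+k}(P)) for all i, j, k ∈ ℕ; and (ii) for all i, j ∈ ℕ with gcd(i − j, n) = 1, δ_𝔭(φ^i(P), φ^j(P)) = δ_𝔭(φ(P), P). -/
/-!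
Common definitions used to formalize the statements of
"Preperiodic points for rational functions defined over a global field
in terms of good reduction" (arXiv:1403.2293).

* A (normalized, non-archimedean) place of a field `K` is modeled as a surjective
  discrete valuation `v : K → ℤ` (with the junk convention `v 0 = 0`).
* `P1 K` is the projective line over `K`; a point `[x : y]` is `P1.mk x y _`.
* An endomorphism of `P1` defined over `K` is a map `φ : P1 K → P1 K` admitting a
  lift by a pair of binary forms of a common degree `d`, given through their
  coefficient vectors, with nonvanishing resultant (the resultant is defined as
  the determinant of the Sylvester matrix).
* `φ` has good reduction at a place `pl` if it admits a lift whose coefficients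
  are `pl`-integral and whose resultant is a `pl`-unit.
* `logDist` is the `𝔭`-adic logarithmic distance `δ_𝔭`; two points of `P1 K` have
  the same reduction modulo `pl` if and only if `0 < logDist pl P Q`.
* The multiplier of a fixed point `[x:y]` of a map lifted by the forms `(a, b)` of
  degree `d` is computed by the trace formula
  `λ = (∂F/∂x (x,y) + ∂G/∂y (x,y) - d⬝c)/c`, where `c` is the scalar with
  `F(x,y) = c⬝x` and `G(x,y) = c⬝y`.
-/

namespace ArxivPreper

/-- A normalized non-archimedean place of `K`: a surjective discrete valuation
`v : K → ℤ`, with the junk convention `v 0 = 0`. -/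
structure Place (K : Type*) [Field K] where
  v : K → ℤ
  v_zero : v 0 = 0
  v_mul : ∀ x y : K, x ≠ 0 → y ≠ 0 → v (x * y) = v x + v y
  v_add : ∀ x y : K, x ≠ 0 → y ≠ 0 → x + y ≠ 0 → min (v x) (v y) ≤ v (x + y)
  v_surj : ∀ n : ℤ, ∃ x : K, x ≠ 0 ∧ v x = n

namespace Place

variable {K : Type*} [Field K] (pl : Place K)

lemma v_one : pl.v 1 = 0 := by
  have h := pl.v_mul 1 1 one_ne_zero one_ne_zero
  rw [one_mul] at h
  omega

lemma v_neg_one : pl.v (-1 : K) = 0 := by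
  have h := pl.v_mul (-1 : K) (-1) (by norm_num) (by norm_num)
  rw [show ((-1 : K) * (-1)) = 1 by ring, pl.v_one] at h
  omega

lemma v_neg (x : K) : pl.v (-x) = pl.v x := by
  by_cases h : x = 0
  · simp [h]
  · have h1 := pl.v_mul (-1) x (by norm_num) h
    rw [show (-1 : K) * x = -x by ring, pl.v_neg_one] at h1
    omega

lemma v_mul_nonneg {x y : K} (hx : 0 ≤ pl.v x) (hy : 0 ≤ pl.v y) : 0 ≤ pl.v (x * y) := by
  by_cases h1 : x = 0
  · simp [h1, pl.v_zero]
  by_cases h2 : y = 0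
  · simp [h2, pl.v_zero]
  rw [pl.v_mul x y h1 h2]
  omega

lemma v_add_nonneg {x y : K} (hx : 0 ≤ pl.v x) (hy : 0 ≤ pl.v y) : 0 ≤ pl.v (x + y) := by
  by_cases h1 : x = 0
  · simpa [h1] using hy
  by_cases h2 : y = 0
  · simpa [h2] using hx
  by_cases h3 : x + y = 0
  · rw [h3, pl.v_zero]
  exact le_trans (le_min hx hy) (pl.v_add x y h1 h2 h3)

lemma hred_add {a b : K} (ha : a = 0 ∨ 0 < pl.v a) (hb : b = 0 ∨ 0 < pl.v b) :
    a + b = 0 ∨ 0 < pl.v (a + b) := by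
  rcases ha with ha | ha
  · subst ha; simpa using hb
  rcases hb with hb | hb
  · subst hb; simpa using Or.inr ha
  by_cases h3 : a + b = 0
  · exact Or.inl h3
  · right
    have hA : a ≠ 0 := by
      intro h; rw [h, pl.v_zero] at ha; exact absurd ha (lt_irrefl 0)
    have hB : b ≠ 0 := by
      intro h; rw [h, pl.v_zero] at hb; exact absurd hb (lt_irrefl 0)
    exact lt_of_lt_of_le (lt_min ha hb) (pl.v_add a b hA hB h3)

lemma hred_mul {a b : K} (ha : 0 ≤ pl.v a) (hb : b = 0 ∨ 0 < pl.v b) :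
    a * b = 0 ∨ 0 < pl.v (a * b) := by
  rcases hb with hb | hb
  · exact Or.inl (by rw [hb, mul_zero])
  by_cases h1 : a = 0
  · exact Or.inl (by rw [h1, zero_mul])
  by_cases h2 : b = 0
  · exact Or.inl (by rw [h2, mul_zero])
  · right
    rw [pl.v_mul a b h1 h2]
    omega

end Place

/-- `K` is a global field: a number field, or a finite extension of `𝔽_p(t)`. -/
def IsGlobalField (K : Type*) [Field K] : Prop :=
  NumberField K ∨
    ∃ (p : ℕ) (hp : Fact p.Prime),
      letI := hp
      ∃ A : Algebra (RatFunc (ZMod p)) K,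
        letI := A
        FiniteDimensional (RatFunc (ZMod p)) K

variable {K : Type*} [Field K]

/-- The projective line over `K`. -/
abbrev P1 (K : Type*) [Field K] := Projectivization K (Fin 2 → K)

/-- The point `[x : y]` of the projective line. -/
def P1.mk (x y : K) (h : ¬(x = 0 ∧ y = 0)) : P1 K :=
  Projectivization.mk K ![x, y]
    (fun h0 => h ⟨by simpa using congrFun h0 0, by simpa using congrFun h0 1⟩)

/-- The point `[0 : 1]`. -/
def P1zero : P1 K := P1.mk 0 1 (fun h => one_ne_zero h.2)

/-- Value at `(x, y)` of the binary form of degree `d` with coefficient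
vector `a` (the coefficient of `x^i y^(d-i)` is `a i`). -/
def formEval (d : ℕ) (a : Fin (d + 1) → K) (x y : K) : K :=
  ∑ i : Fin (d + 1), a i * x ^ (i : ℕ) * y ^ (d - (i : ℕ))

/-- The Sylvester matrix of two binary forms of degree `d`, given by their
coefficient vectors. -/
def sylvester (d : ℕ) (a b : Fin (d + 1) → K) : Matrix (Fin (d + d)) (Fin (d + d)) K :=
  Matrix.of fun i j =>
    if hi : (i : ℕ) < d then
      if h : (i : ℕ) ≤ (j : ℕ) ∧ (j : ℕ) ≤ (i : ℕ) + d then a ⟨(j : ℕ) - (i : ℕ), by omega⟩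
      else 0
    else
      if h : (i : ℕ) - d ≤ (j : ℕ) ∧ (j : ℕ) ≤ (i : ℕ) then
        b ⟨(j : ℕ) - ((i : ℕ) - d), by omega⟩
      else 0

/-- The resultant of two binary forms of degree `d`: the determinant of their
Sylvester matrix. -/
def resultant (d : ℕ) (a b : Fin (d + 1) → K) : K := (sylvester d a b).det

/-- `(a, b)` is a pair of coefficient vectors of binary forms `F`, `G` of common degree `d`,
with nonzero resultant, such that `φ([x:y]) = [F(x,y) : G(x,y)]` on `P1 K`.  This witnesses
that `φ` is an endomorphism of the projective line defined over `K` (of degree `d`). -/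
def IsLift (φ : P1 K → P1 K) (d : ℕ) (a b : Fin (d + 1) → K) : Prop :=
  resultant d a b ≠ 0 ∧
    ∀ (x y : K) (h : ¬(x = 0 ∧ y = 0)),
      ∃ h' : ¬(formEval d a x y = 0 ∧ formEval d b x y = 0),
        φ (P1.mk x y h) = P1.mk (formEval d a x y) (formEval d b x y) h'

/-- `φ` is an endomorphism of `P1` defined over `K`. -/
def IsEndo (φ : P1 K → P1 K) : Prop := ∃ d a b, IsLift φ d a b

/-- `φ` has good reduction at the place `pl`: it can be written as `[F : G]` with `F`, `G`
binary forms of a common degree whose coefficients are `pl`-integral and whose resultant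
is a `pl`-unit. -/
def GoodReduction (pl : Place K) (φ : P1 K → P1 K) : Prop :=
  ∃ (d : ℕ) (a b : Fin (d + 1) → K),
    IsLift φ d a b ∧ (∀ i, 0 ≤ pl.v (a i)) ∧ (∀ i, 0 ≤ pl.v (b i)) ∧
      pl.v (resultant d a b) = 0

open Classical in
/-- The valuation of a place extended by `v 0 = ⊤`. -/
noncomputable def extv (pl : Place K) (x : K) : WithTop ℤ :=
  if x = 0 then ⊤ else (pl.v x : WithTop ℤ)

open Classical in
/-- `min (v x) (v y)` for a nonzero vector `(x, y)`, ignoring vanishing coordinates. -/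
noncomputable def vminVec (pl : Place K) (w : Fin 2 → K) : ℤ :=
  if w 0 = 0 then pl.v (w 1)
  else if w 1 = 0 then pl.v (w 0)
  else min (pl.v (w 0)) (pl.v (w 1))

/-- The `𝔭`-adic logarithmic distance
`δ_𝔭(P,Q) = v(x₁y₂ - x₂y₁) - min (v x₁) (v y₁) - min (v x₂) (v y₂)`
(computed on fixed representatives; it is independent of the choice of homogeneous
coordinates).  Note `δ_𝔭(P,Q) = ⊤` iff `P = Q`, and two points have the same reduction
modulo `pl` iff `0 < δ_𝔭(P,Q)`. -/
noncomputable def logDist (pl : Place K) (P Q : P1 K) : WithTop ℤ :=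
  extv pl (P.rep 0 * Q.rep 1 - Q.rep 0 * P.rep 1) +
    ((-(vminVec pl P.rep) - vminVec pl Q.rep : ℤ) : WithTop ℤ)

/-- The forward orbit `{φ^n(P) : n ∈ ℕ}` of `P` under `φ`. -/
def orbit (φ : P1 K → P1 K) (P : P1 K) : Set (P1 K) := Set.range fun n : ℕ => φ^[n] P

/-- `P` is preperiodic for `φ`: its forward orbit is finite. -/
def Preperiodic (φ : P1 K → P1 K) (P : P1 K) : Prop := (orbit φ P).Finite

/-- `P` is periodic for `φ`. -/
def PeriodicPt (φ : P1 K → P1 K) (P : P1 K) : Prop := ∃ n : ℕ, 0 < n ∧ φ^[n] P = P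

/-- `x` is an `S`-unit of `K`. -/
def IsSUnit (S : Finset (Place K)) (x : K) : Prop :=
  x ≠ 0 ∧ ∀ pl : Place K, pl ∉ S → pl.v x = 0

/-- The ring of `S`-integers of `K`. -/
def SIntegers (S : Finset (Place K)) : Subring K where
  carrier := {x : K | ∀ pl : Place K, pl ∉ S → 0 ≤ pl.v x}
  zero_mem' := fun pl _ => le_of_eq pl.v_zero.symm
  one_mem' := fun pl _ => le_of_eq pl.v_one.symm
  add_mem' := fun hx hy pl hpl => pl.v_add_nonneg (hx pl hpl) (hy pl hpl)
  mul_mem' := fun hx hy pl hpl => pl.v_mul_nonneg (hx pl hpl) (hy pl hpl)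
  neg_mem' := fun {x} hx pl hpl => show 0 ≤ pl.v (-x) by rw [pl.v_neg]; exact hx pl hpl

/-- The local ring `R_𝔭 = {x : v_𝔭(x) ≥ 0}` at the place `pl`. -/
def integersAt (pl : Place K) : Subring K where
  carrier := {x : K | 0 ≤ pl.v x}
  zero_mem' := le_of_eq pl.v_zero.symm
  one_mem' := le_of_eq pl.v_one.symm
  add_mem' := fun hx hy => pl.v_add_nonneg hx hy
  mul_mem' := fun hx hy => pl.v_mul_nonneg hx hy
  neg_mem' := fun {x} hx => show 0 ≤ pl.v (-x) by rw [pl.v_neg]; exact hx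

/-- The maximal ideal `{x : v_𝔭(x) > 0}` of the local ring at `pl`. -/
def maxIdealAt (pl : Place K) : Ideal ↥(integersAt pl) where
  carrier := {x : ↥(integersAt pl) | (x : K) = 0 ∨ 0 < pl.v (x : K)}
  zero_mem' := Or.inl rfl
  add_mem' := fun {a b} ha hb => by
    have h := pl.hred_add (a := (a : K)) (b := (b : K)) ha hb
    show ((a + b : ↥(integersAt pl)) : K) = 0 ∨ 0 < pl.v ((a + b : ↥(integersAt pl)) : K)
    push_cast
    exact h
  smul_mem' := fun c {x} hx => by
    have h := pl.hred_mul (a := (c : K)) (b := (x : K)) c.2 hx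
    show ((c • x : ↥(integersAt pl)) : K) = 0 ∨ 0 < pl.v ((c • x : ↥(integersAt pl)) : K)
    rw [smul_eq_mul]
    push_cast
    exact h

/-- The residue field `k(𝔭)` at the place `pl`. -/
def Residue (pl : Place K) : Type _ := ↥(integersAt pl) ⧸ maxIdealAt pl

/-- Value at `(x,y)` of `∂F/∂x` for the binary form `F` of degree `d` with coefficient
vector `a`. -/
def formEvalDx (d : ℕ) (a : Fin (d + 1) → K) (x y : K) : K :=
  ∑ i : Fin (d + 1), ((i : ℕ) : K) * a i * x ^ ((i : ℕ) - 1) * y ^ (d - (i : ℕ))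

/-- Value at `(x,y)` of `∂G/∂y` for the binary form `G` of degree `d` with coefficient
vector `b`. -/
def formEvalDy (d : ℕ) (b : Fin (d + 1) → K) (x y : K) : K :=
  ∑ i : Fin (d + 1), ((d - (i : ℕ) : ℕ) : K) * b i * x ^ (i : ℕ) * y ^ (d - (i : ℕ) - 1)

/-- The multiplier `λ_P` at a fixed point `P = [x:y]` of the map lifted by the pair of
degree-`d` binary forms `(a, b)`, where `c` is the scalar with `F(x,y) = c⬝x` and
`G(x,y) = c⬝y`: by the trace formula, `λ = (F_x(x,y) + G_y(x,y) - d⬝c)/c`. -/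
noncomputable def multiplier (d : ℕ) (a b : Fin (d + 1) → K) (x y c : K) : K :=
  (formEvalDx d a x y + formEvalDy d b x y - (d : K) * c) / c

end ArxivPreper

/-!
Good reduction makes `φ` non-expanding for `δ = δ_𝔭` (larger means closer). On primitive
coordinates `δ(P, Q) = v(x₁y₂ - x₂y₁)`; the expression `F(x₁,y₁)G(x₂,y₂) - F(x₂,y₂)G(x₁,y₁)` is
an integral multiple of `x₁y₂ - x₂y₁`, and `[F(x,y) : G(x,y)]` is again primitive because
`Res(F,G)⬝x^(2d-1)` and `Res(F,G)⬝y^(2d-1)` lie in the ideal `(F(x,y), G(x,y))`.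

Along the cycle of `P`, `k ↦ δ(φ^(i+k) P, φ^(j+k) P)` is then nondecreasing and `n`-periodic,
hence constant. For (ii), `D m = δ(φ^m P, P)` satisfies `min (D a) (D b) ≤ D (a + b)` by the
ultrametric inequality, so `D 1 ≤ D m ≤ D (t m)` for `m, t ≥ 1`; for `m` prime to `n` choose
`t m ≡ 1 (mod n)`, so that `D (t m) = D 1`.
-/

theorem Monotone.eq_apply_zero_of_periodic {α : Type*} [PartialOrder α] {g : ℕ → α}
    (hg : Monotone g) {n : ℕ} (hper : Function.Periodic g n) (hn : 0 < n) (k : ℕ) :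
    g k = g 0 :=
  le_antisymm (hper.nat_mul_eq k ▸ hg (Nat.le_mul_of_pos_right k hn)) (hg k.zero_le)

namespace Function

variable {X α : Type*} [LinearOrder α] {δ : X → X → α} {f : X → X} {P : X} {n : ℕ}

theorem IsPeriodicPt.iterate_eq_iterate_of_modEq (hP : IsPeriodicPt f n P) {a b : ℕ}
    (hab : a ≡ b [MOD n]) : f^[a] P = f^[b] P := by
  rw [← hP.iterate_mod_apply a, ← hP.iterate_mod_apply b, hab]

theorem IsPeriodicPt.dist_iterate_add_iterate_add (hf : ∀ P Q, δ P Q ≤ δ (f P) (f Q))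
    (hP : IsPeriodicPt f n P) (hn : 0 < n) (i j k : ℕ) :
    δ (f^[i + k] P) (f^[j + k] P) = δ (f^[i] P) (f^[j] P) := by
  set g : ℕ → α := fun k => δ (f^[i + k] P) (f^[j + k] P)
  have hmono : Monotone g := monotone_nat_of_le_succ fun k => by
    simp only [g, ← add_assoc, iterate_succ_apply']
    exact hf _ _
  have hper : Periodic g n := fun k => by
    simp only [g, iterate_add_apply, hP.eq]
  exact hmono.eq_apply_zero_of_periodic hper hn k

theorem IsPeriodicPt.dist_iterate_self_of_coprime (hf : ∀ P Q, δ P Q ≤ δ (f P) (f Q))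
    (hultra : ∀ P Q R, min (δ P Q) (δ Q R) ≤ δ P R) (hP : IsPeriodicPt f n P) (hn : 0 < n)
    {m : ℕ} (hm : m.Coprime n) : δ (f^[m] P) P = δ (f P) P := by
  set D : ℕ → α := fun m => δ (f^[m] P) P
  have hsuper (a b : ℕ) : min (D a) (D b) ≤ D (a + b) := by
    have h := hP.dist_iterate_add_iterate_add hf hn a 0 b
    rw [zero_add, iterate_zero_apply] at h
    simpa [D, h] using hultra (f^[a + b] P) (f^[b] P) P
  have hmul (a t : ℕ) (ht : 1 ≤ t) : D a ≤ D (a * t) := by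
    induction t, ht using Nat.le_induction with
    | base => rw [mul_one]
    | succ t _ ih =>
      exact (le_min le_rfl ih).trans (by simpa [mul_add_one, add_comm] using hsuper a (a * t))
  have hmod {a b : ℕ} (hab : a ≡ b [MOD n]) : D a = D b := by
    simp only [D, hP.iterate_eq_iterate_of_modEq hab]
  -- pass to `m + n ≥ 1`; by Euler, `(m + n) ^ φ(n) ≡ 1 (mod n)` is a multiple of `m + n`
  have hm' : 1 ≤ m + n := by omega
  have hpow : (m + n) * (m + n) ^ (n.totient - 1) = (m + n) ^ n.totient := by
    rw [← pow_succ', Nat.sub_add_cancel (Nat.totient_pos.2 hn)]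
  have hD : D m = D (m + n) := hmod Nat.add_modEq_right.symm
  refine le_antisymm ?_ ?_
  · calc D m = D (m + n) := hD
      _ ≤ D ((m + n) * (m + n) ^ (n.totient - 1)) := hmul _ _ (Nat.one_le_pow _ _ hm')
      _ = D 1 := by
        rw [hpow]
        exact hmod (Nat.ModEq.pow_totient (Nat.coprime_add_self_left.2 hm))
      _ = δ (f P) P := by simp [D]
  · calc δ (f P) P = D 1 := by simp [D]
      _ ≤ D (1 * (m + n)) := hmul 1 _ hm'
      _ = D m := by rw [one_mul, hD]

theorem IsPeriodicPt.dist_iterate_iterate_of_gcd_eq_one (hf : ∀ P Q, δ P Q ≤ δ (f P) (f Q))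
    (hsymm : ∀ P Q, δ P Q = δ Q P) (hultra : ∀ P Q R, min (δ P Q) (δ Q R) ≤ δ P R)
    (hP : IsPeriodicPt f n P) (hn : 0 < n) {i j : ℕ} (hij : Int.gcd ((i : ℤ) - j) n = 1) :
    δ (f^[i] P) (f^[j] P) = δ (f P) P := by
  wlog hji : j ≤ i generalizing i j
  · rw [hsymm]
    exact this (by rwa [← Int.neg_gcd, neg_sub]) (by omega)
  obtain ⟨m, rfl⟩ := Nat.exists_eq_add_of_le hji
  have h := hP.dist_iterate_add_iterate_add hf hn m 0 j
  rw [zero_add, iterate_zero_apply, add_comm m j] at h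
  rw [h]
  exact hP.dist_iterate_self_of_coprime hf hultra hn (by simpa [Int.gcd] using hij)

end Function

theorem AddValuation.le_map_mulVec {R Γ₀ : Type*} [CommRing R]
    [LinearOrderedAddCommMonoidWithTop Γ₀] (v : AddValuation R Γ₀) {m n : Type*} [Fintype n]
    {M : Matrix m n R} {u : n → R} {c : Γ₀} (hM : ∀ i j, 0 ≤ v (M i j))
    (hu : ∀ j, c ≤ v (u j)) (i : m) : c ≤ v (M.mulVec u i) :=
  v.map_le_sum fun j _ => by
    rw [v.map_mul]
    exact le_add_of_nonneg_of_le (hM i j) (hu j)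

theorem Matrix.adjugate_mem_of_forall_mem {n R : Type*} [DecidableEq n] [Fintype n] [CommRing R]
    {S : Subring R} {M : Matrix n n R} (hM : ∀ i j, M i j ∈ S) (i j : n) :
    M.adjugate i j ∈ S := by
  have : M = S.subtype.mapMatrix (Matrix.of fun i j => ⟨M i j, hM i j⟩) := rfl
  rw [this, ← RingHom.map_adjugate]
  exact Subtype.prop _

theorem sub_dvd_monomial_cross {R : Type*} [CommRing R] (x₁ y₁ x₂ y₂ : R) {p q r s : ℕ}
    (h : p + q = r + s) :
    x₁ * y₂ - x₂ * y₁ ∣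
      x₁ ^ p * y₁ ^ q * (x₂ ^ r * y₂ ^ s) - x₂ ^ p * y₂ ^ q * (x₁ ^ r * y₁ ^ s) := by
  wlog hrp : r ≤ p generalizing p q r s
  · rw [← dvd_neg, neg_sub]
    exact (this h.symm (by omega)).trans (dvd_of_eq (by ring))
  obtain ⟨k, rfl⟩ := Nat.exists_eq_add_of_le hrp
  obtain rfl : s = q + k := by omega
  refine ((sub_dvd_pow_sub_pow (x₁ * y₂) (x₂ * y₁) k).mul_left
    ((x₁ * x₂) ^ r * (y₁ * y₂) ^ q)).trans (dvd_of_eq ?_)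
  ring

theorem sub_dvd_form_cross {R : Type*} [CommRing R] (d : ℕ) (a b : Fin (d + 1) → R)
    (x₁ y₁ x₂ y₂ : R) :
    x₁ * y₂ - x₂ * y₁ ∣
      (∑ i : Fin (d + 1), a i * x₁ ^ (i : ℕ) * y₁ ^ (d - i)) *
          (∑ j : Fin (d + 1), b j * x₂ ^ (j : ℕ) * y₂ ^ (d - j)) -
        (∑ i : Fin (d + 1), a i * x₂ ^ (i : ℕ) * y₂ ^ (d - i)) *
          (∑ j : Fin (d + 1), b j * x₁ ^ (j : ℕ) * y₁ ^ (d - j)) := by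
  rw [Finset.sum_mul_sum, Finset.sum_mul_sum, ← Finset.sum_sub_distrib]
  refine Finset.dvd_sum fun i _ => ?_
  rw [← Finset.sum_sub_distrib]
  refine Finset.dvd_sum fun j _ => ?_
  have := (sub_dvd_monomial_cross x₁ y₁ x₂ y₂ (p := i) (q := d - i) (r := j) (s := d - j)
    (by omega)).mul_left (a i * b j)
  exact this.trans (dvd_of_eq (by ring))

namespace ArxivPreper

variable {K : Type*} [Field K]

namespace Place

variable (pl : Place K)

noncomputable def addVal : AddValuation K (WithTop ℤ) :=
  AddValuation.of (extv pl) (by simp [extv]) (by simp [extv, pl.v_one])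
    (fun x y => by
      rcases eq_or_ne x 0 with rfl | hx
      · simp
      rcases eq_or_ne y 0 with rfl | hy
      · simp
      by_cases hxy : x + y = 0
      · simp [extv, hxy]
      simpa [extv, hx, hy, hxy] using pl.v_add x y hx hy hxy)
    (fun x y => by
      by_cases hx : x = 0
      · simp [extv, hx]
      by_cases hy : y = 0
      · simp [extv, hy]
      simp [extv, hx, hy, pl.v_mul x y hx hy])

lemma addVal_of_ne_zero {x : K} (hx : x ≠ 0) : pl.addVal x = pl.v x := if_neg hx

lemma mem_integersAt_iff {x : K} : x ∈ integersAt pl ↔ 0 ≤ pl.addVal x := by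
  by_cases hx : x = 0
  · simp [hx, integersAt]
  · rw [addVal_of_ne_zero pl hx, WithTop.coe_nonneg]
    rfl

end Place

variable (pl : Place K)

lemma coe_vminVec {x y : K} (h : ¬(x = 0 ∧ y = 0)) :
    (vminVec pl ![x, y] : WithTop ℤ) = min (pl.addVal x) (pl.addVal y) := by
  by_cases h0 : x = 0
  · have h1 : y ≠ 0 := fun h1 => h ⟨h0, h1⟩
    simp [vminVec, h0, pl.addVal_of_ne_zero h1]
  · by_cases h1 : y = 0
    · simp [vminVec, h0, h1, pl.addVal_of_ne_zero h0]
    · simp [vminVec, h0, h1, pl.addVal_of_ne_zero h0, pl.addVal_of_ne_zero h1]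

lemma vminVec_smul {x y : K} (h : ¬(x = 0 ∧ y = 0)) {c : K} (hc : c ≠ 0) :
    vminVec pl ![c * x, c * y] = pl.v c + vminVec pl ![x, y] := by
  have hcxy : ¬(c * x = 0 ∧ c * y = 0) := by simpa [hc] using h
  have key := coe_vminVec pl hcxy
  rw [AddValuation.map_mul, AddValuation.map_mul, min_add_add_left, ← coe_vminVec pl h,
    pl.addVal_of_ne_zero hc] at key
  exact_mod_cast key

lemma P1.exists_rep_eq {x y : K} (h : ¬(x = 0 ∧ y = 0)) :
    ∃ c : K, c ≠ 0 ∧ (P1.mk x y h).rep = ![c * x, c * y] := by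
  have hne : (![x, y] : Fin 2 → K) ≠ 0 := fun h0 => h ⟨congrFun h0 0, congrFun h0 1⟩
  obtain ⟨c, hc⟩ := Projectivization.exists_smul_eq_mk_rep K ![x, y] hne
  refine ⟨c, c.ne_zero, ?_⟩
  rw [show P1.mk x y h = Projectivization.mk K ![x, y] hne from rfl, ← hc]
  ext i
  fin_cases i <;> rfl

lemma logDist_mk {x₁ y₁ x₂ y₂ : K} (h₁ : ¬(x₁ = 0 ∧ y₁ = 0)) (h₂ : ¬(x₂ = 0 ∧ y₂ = 0)) :
    logDist pl (P1.mk x₁ y₁ h₁) (P1.mk x₂ y₂ h₂) = pl.addVal (x₁ * y₂ - x₂ * y₁) +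
      ((-vminVec pl ![x₁, y₁] - vminVec pl ![x₂, y₂] : ℤ) : WithTop ℤ) := by
  obtain ⟨c₁, hc₁, e₁⟩ := P1.exists_rep_eq h₁
  obtain ⟨c₂, hc₂, e₂⟩ := P1.exists_rep_eq h₂
  have hcross : c₁ * x₁ * (c₂ * y₂) - c₂ * x₂ * (c₁ * y₁) = c₁ * c₂ * (x₁ * y₂ - x₂ * y₁) := by
    ring
  change pl.addVal _ + _ = _
  rw [e₁, e₂]
  simp only [Matrix.cons_val_zero, Matrix.cons_val_one]
  rw [hcross, vminVec_smul pl h₁ hc₁, vminVec_smul pl h₂ hc₂, AddValuation.map_mul,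
    AddValuation.map_mul, pl.addVal_of_ne_zero hc₁, pl.addVal_of_ne_zero hc₂]
  induction pl.addVal (x₁ * y₂ - x₂ * y₁) using WithTop.recTopCoe with
  | top => simp
  | coe V => norm_cast; ring

lemma logDist_mk_of_min_eq_zero {x₁ y₁ x₂ y₂ : K} (h₁ : ¬(x₁ = 0 ∧ y₁ = 0))
    (h₂ : ¬(x₂ = 0 ∧ y₂ = 0)) (hp₁ : min (pl.addVal x₁) (pl.addVal y₁) = 0)
    (hp₂ : min (pl.addVal x₂) (pl.addVal y₂) = 0) :
    logDist pl (P1.mk x₁ y₁ h₁) (P1.mk x₂ y₂ h₂) = pl.addVal (x₁ * y₂ - x₂ * y₁) := by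
  rw [← coe_vminVec pl h₁, WithTop.coe_eq_zero] at hp₁
  rw [← coe_vminVec pl h₂, WithTop.coe_eq_zero] at hp₂
  simp [logDist_mk, hp₁, hp₂]

lemma addVal_le_logDist_mk {x₁ y₁ x₂ y₂ : K} (h₁ : ¬(x₁ = 0 ∧ y₁ = 0))
    (h₂ : ¬(x₂ = 0 ∧ y₂ = 0)) (hp₁ : min (pl.addVal x₁) (pl.addVal y₁) ≤ 0)
    (hp₂ : min (pl.addVal x₂) (pl.addVal y₂) ≤ 0) :
    pl.addVal (x₁ * y₂ - x₂ * y₁) ≤ logDist pl (P1.mk x₁ y₁ h₁) (P1.mk x₂ y₂ h₂) := by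
  have hk₁ : vminVec pl ![x₁, y₁] ≤ 0 := by exact_mod_cast (coe_vminVec pl h₁).trans_le hp₁
  have hk₂ : vminVec pl ![x₂, y₂] ≤ 0 := by exact_mod_cast (coe_vminVec pl h₂).trans_le hp₂
  rw [logDist_mk]
  exact le_add_of_nonneg_right (WithTop.coe_nonneg.2 (by omega))

lemma P1.mk_smul {x y : K} (h : ¬(x = 0 ∧ y = 0)) {c : K}
    (hc : ¬(c * x = 0 ∧ c * y = 0)) : P1.mk (c * x) (c * y) hc = P1.mk x y h := by
  refine (Projectivization.mk_eq_mk_iff' K _ _ _ _).2 ⟨c, ?_⟩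
  ext i
  fin_cases i <;> rfl

lemma exists_mk_min_eq_zero (P : P1 K) : ∃ (x y : K) (h : ¬(x = 0 ∧ y = 0)),
    P = P1.mk x y h ∧ min (pl.addVal x) (pl.addVal y) = 0 := by
  have h : ¬(P.rep 0 = 0 ∧ P.rep 1 = 0) := fun h =>
    P.rep_nonzero (funext fun i => by fin_cases i <;> simp [h.1, h.2])
  have hP : P1.mk (P.rep 0) (P.rep 1) h = P := by
    conv_rhs => rw [← P.mk_rep]
    refine (Projectivization.mk_eq_mk_iff' K _ _ _ _).2 ⟨1, ?_⟩
    ext i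
    fin_cases i <;> simp
  obtain ⟨c, hc, hvc⟩ := pl.v_surj (-vminVec pl ![P.rep 0, P.rep 1])
  have hc' : ¬(c * P.rep 0 = 0 ∧ c * P.rep 1 = 0) := by simpa [hc] using h
  refine ⟨_, _, hc', by rw [P1.mk_smul h, hP], ?_⟩
  rw [AddValuation.map_mul, AddValuation.map_mul, min_add_add_left, ← coe_vminVec pl h,
    pl.addVal_of_ne_zero hc, hvc, ← WithTop.coe_add, neg_add_cancel, WithTop.coe_zero]

lemma logDist_comm (P Q : P1 K) : logDist pl P Q = logDist pl Q P := by
  change pl.addVal _ + _ = pl.addVal _ + _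
  rw [← AddValuation.map_neg, neg_sub]
  congr 2
  ring

lemma logDist_self (P : P1 K) : logDist pl P P = ⊤ := by
  simp [logDist, extv]

lemma logDist_triangle (P Q R : P1 K) :
    min (logDist pl P Q) (logDist pl Q R) ≤ logDist pl P R := by
  obtain ⟨x₁, y₁, h₁, rfl, hp₁⟩ := exists_mk_min_eq_zero pl P
  obtain ⟨x₂, y₂, h₂, rfl, hp₂⟩ := exists_mk_min_eq_zero pl Q
  obtain ⟨x₃, y₃, h₃, rfl, hp₃⟩ := exists_mk_min_eq_zero pl R
  rw [logDist_mk_of_min_eq_zero pl h₁ h₂ hp₁ hp₂, logDist_mk_of_min_eq_zero pl h₂ h₃ hp₂ hp₃,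
    logDist_mk_of_min_eq_zero pl h₁ h₃ hp₁ hp₃]
  obtain ⟨hx₁, hy₁⟩ := le_min_iff.1 hp₁.ge
  obtain ⟨hx₃, hy₃⟩ := le_min_iff.1 hp₃.ge
  set c := min (pl.addVal (x₁ * y₂ - x₂ * y₁)) (pl.addVal (x₂ * y₃ - x₃ * y₂))
  have key {z₁ z₂ z₃ : K} (hz₁ : 0 ≤ pl.addVal z₁) (hz₃ : 0 ≤ pl.addVal z₃)
      (hz : z₂ * (x₁ * y₃ - x₃ * y₁) =
        z₃ * (x₁ * y₂ - x₂ * y₁) + z₁ * (x₂ * y₃ - x₃ * y₂)) :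
      c ≤ pl.addVal z₂ + pl.addVal (x₁ * y₃ - x₃ * y₁) := by
    rw [← AddValuation.map_mul, hz]
    refine pl.addVal.map_le_add ?_ ?_ <;> rw [AddValuation.map_mul]
    · exact le_add_of_nonneg_of_le hz₃ (min_le_left _ _)
    · exact le_add_of_nonneg_of_le hz₁ (min_le_right _ _)
  calc c ≤ min (pl.addVal x₂ + pl.addVal (x₁ * y₃ - x₃ * y₁))
        (pl.addVal y₂ + pl.addVal (x₁ * y₃ - x₃ * y₁)) :=
        le_min (key hx₁ hx₃ (by ring)) (key hy₁ hy₃ (by ring))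
    _ = pl.addVal (x₁ * y₃ - x₃ * y₁) := by rw [min_add_add_right, hp₂, zero_add]

lemma sum_mul_monomial_of_window {d s : ℕ} (hs : s < d) (c : Fin (d + 1) → K)
    (r : Fin (d + d) → K) (hin : ∀ k : Fin (d + 1), r ⟨s + k, by omega⟩ = c k)
    (hout : ∀ j : Fin (d + d), (j : ℕ) < s ∨ s + d < j → r j = 0) (x y : K) :
    ∑ j, r j * (x ^ (j : ℕ) * y ^ (d + d - 1 - j)) =
      x ^ s * y ^ (d - 1 - s) * formEval d c x y := by
  rw [formEval, Finset.mul_sum]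
  symm
  refine Fintype.sum_of_injective (fun k : Fin (d + 1) => (⟨s + k, by omega⟩ : Fin (d + d)))
    (fun k l hkl => Fin.ext (by simpa using congrArg Fin.val hkl)) _ _ (fun j hj => ?_)
    (fun k => ?_)
  · by_cases hjs : s ≤ j ∧ (j : ℕ) ≤ s + d
    · exact absurd ⟨⟨j - s, by omega⟩, Fin.ext (by simp; omega)⟩ hj
    · rw [hout j (by omega), zero_mul]
  · rw [hin, pow_add, show d + d - 1 - (s + k) = (d - 1 - s) + (d - k) by omega, pow_add]
    ring

lemma sylvester_mulVec (d : ℕ) (a b : Fin (d + 1) → K) (x y : K) (i : Fin (d + d)) :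
    (sylvester d a b).mulVec (fun j => x ^ (j : ℕ) * y ^ (d + d - 1 - j)) i =
      if (i : ℕ) < d then x ^ (i : ℕ) * y ^ (d - 1 - i) * formEval d a x y
      else x ^ ((i : ℕ) - d) * y ^ (d - 1 - (i - d)) * formEval d b x y := by
  rw [Matrix.mulVec, dotProduct]
  split_ifs with hi
  · refine sum_mul_monomial_of_window hi a _ (fun k => ?_) (fun j hj => ?_) x y
    · rw [sylvester, Matrix.of_apply, dif_pos hi, dif_pos (by simp; omega)]
      simp
    · simp [sylvester, hi]
      omega
  · refine sum_mul_monomial_of_window (by omega) b _ (fun k => ?_) (fun j hj => ?_) x y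
    · rw [sylvester, Matrix.of_apply, dif_neg hi, dif_pos (by simp; omega)]
      simp
    · simp [sylvester, hi]
      omega

lemma sylvester_mem_integersAt {d : ℕ} {a b : Fin (d + 1) → K} (ha : ∀ i, a i ∈ integersAt pl)
    (hb : ∀ i, b i ∈ integersAt pl) (i j : Fin (d + d)) : sylvester d a b i j ∈ integersAt pl := by
  simp only [sylvester, Matrix.of_apply]
  split_ifs
  exacts [ha _, zero_mem _, hb _, zero_mem _]

lemma min_addVal_formEval_le_zero {d : ℕ} (hd : 0 < d) {a b : Fin (d + 1) → K}
    (ha : ∀ i, a i ∈ integersAt pl) (hb : ∀ i, b i ∈ integersAt pl)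
    (hres : pl.addVal (resultant d a b) = 0) {x y : K} (hx : x ∈ integersAt pl)
    (hy : y ∈ integersAt pl) (hxy : min (pl.addVal x) (pl.addVal y) = 0) :
    min (pl.addVal (formEval d a x y)) (pl.addVal (formEval d b x y)) ≤ 0 := by
  set c := min (pl.addVal (formEval d a x y)) (pl.addVal (formEval d b x y))
  set w : Fin (d + d) → K := fun j => x ^ (j : ℕ) * y ^ (d + d - 1 - j)
  have hmon (p q : ℕ) : 0 ≤ pl.addVal (x ^ p * y ^ q) :=
    (pl.mem_integersAt_iff).1 (mul_mem (pow_mem hx p) (pow_mem hy q))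
  have hMw (i : Fin (d + d)) : c ≤ pl.addVal ((sylvester d a b).mulVec w i) := by
    rw [sylvester_mulVec]
    split_ifs <;> rw [AddValuation.map_mul]
    · exact le_add_of_nonneg_of_le (hmon _ _) (min_le_left _ _)
    · exact le_add_of_nonneg_of_le (hmon _ _) (min_le_right _ _)
  -- `adj(M) (M w) = Res · w` with `adj(M)` integral and `Res` a unit
  have hw (j : Fin (d + d)) : c ≤ pl.addVal (w j) := by
    have := pl.addVal.le_map_mulVec (fun i j => (pl.mem_integersAt_iff).1
      (Matrix.adjugate_mem_of_forall_mem (sylvester_mem_integersAt pl ha hb) i j)) hMw j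
    rwa [Matrix.mulVec_mulVec, Matrix.adjugate_mul, Matrix.smul_mulVec, Matrix.one_mulVec,
      Pi.smul_apply, smul_eq_mul, AddValuation.map_mul, ← resultant, hres, zero_add] at this
  rcases min_eq_iff.1 hxy with ⟨hx0, -⟩ | ⟨hy0, -⟩
  · simpa [w, AddValuation.map_pow, hx0] using hw ⟨d + d - 1, by omega⟩
  · simpa [w, AddValuation.map_pow, hy0] using hw ⟨0, by omega⟩

lemma formEval_zero (c : Fin 1 → K) (x y : K) : formEval 0 c x y = c 0 := by
  simp [formEval]

lemma addVal_cross_le_addVal_formEval_cross {d : ℕ} {a b : Fin (d + 1) → K}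
    (ha : ∀ i, a i ∈ integersAt pl) (hb : ∀ i, b i ∈ integersAt pl) {x₁ y₁ x₂ y₂ : K}
    (hx₁ : x₁ ∈ integersAt pl) (hy₁ : y₁ ∈ integersAt pl) (hx₂ : x₂ ∈ integersAt pl)
    (hy₂ : y₂ ∈ integersAt pl) :
    pl.addVal (x₁ * y₂ - x₂ * y₁) ≤ pl.addVal
      (formEval d a x₁ y₁ * formEval d b x₂ y₂ - formEval d a x₂ y₂ * formEval d b x₁ y₁) := by
  obtain ⟨s, hs⟩ := sub_dvd_form_cross d (fun i => (⟨a i, ha i⟩ : integersAt pl))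
    (fun i => ⟨b i, hb i⟩) ⟨x₁, hx₁⟩ ⟨y₁, hy₁⟩ ⟨x₂, hx₂⟩ ⟨y₂, hy₂⟩
  have h := congrArg ((↑) : integersAt pl → K) hs
  push_cast at h
  rw [formEval, formEval, formEval, formEval, h, AddValuation.map_mul]
  exact le_add_of_nonneg_right ((pl.mem_integersAt_iff).1 s.2)

lemma logDist_le_logDist_apply {φ : P1 K → P1 K} (hφ : GoodReduction pl φ) (P Q : P1 K) :
    logDist pl P Q ≤ logDist pl (φ P) (φ Q) := by
  obtain ⟨d, a, b, ⟨hres₀, hlift⟩, ha, hb, hres⟩ := hφ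
  obtain ⟨x₁, y₁, h₁, rfl, hp₁⟩ := exists_mk_min_eq_zero pl P
  obtain ⟨x₂, y₂, h₂, rfl, hp₂⟩ := exists_mk_min_eq_zero pl Q
  obtain ⟨h₁', hφ₁⟩ := hlift x₁ y₁ h₁
  obtain ⟨h₂', hφ₂⟩ := hlift x₂ y₂ h₂
  rw [hφ₁, hφ₂]
  rcases Nat.eq_zero_or_pos d with rfl | hd
  · have hconst : P1.mk (formEval 0 a x₁ y₁) (formEval 0 b x₁ y₁) h₁' =
        P1.mk (formEval 0 a x₂ y₂) (formEval 0 b x₂ y₂) h₂' := by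
      simp only [formEval_zero]
    rw [hconst, logDist_self]
    exact le_top
  obtain ⟨hx₁, hy₁⟩ := le_min_iff.1 hp₁.ge
  obtain ⟨hx₂, hy₂⟩ := le_min_iff.1 hp₂.ge
  rw [← pl.mem_integersAt_iff] at hx₁ hy₁ hx₂ hy₂
  replace hres : pl.addVal (resultant d a b) = 0 := by
    rw [pl.addVal_of_ne_zero hres₀, hres, WithTop.coe_zero]
  rw [logDist_mk_of_min_eq_zero pl h₁ h₂ hp₁ hp₂]
  exact (addVal_cross_le_addVal_formEval_cross pl ha hb hx₁ hy₁ hx₂ hy₂).trans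
    (addVal_le_logDist_mk pl h₁' h₂'
      (min_addVal_formEval_le_zero pl hd ha hb hres hx₁ hy₁ hp₁)
      (min_addVal_formEval_le_zero pl hd ha hb hres hx₂ hy₂ hp₂))

theorem stmt18_general (K : Type) [Field K] (pl : Place K)
    (φ : P1 K → P1 K) (hgood : GoodReduction pl φ)
    (P : P1 K) (hP : PeriodicPt φ P)
    (n : ℕ) (hn : n = Function.minimalPeriod φ P) :
    (∀ i j k : ℕ,
        logDist pl (φ^[i] P) (φ^[j] P) = logDist pl (φ^[i + k] P) (φ^[j + k] P)) ∧
      (∀ i j : ℕ, Int.gcd ((i : ℤ) - (j : ℤ)) (n : ℤ) = 1 →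
        logDist pl (φ^[i] P) (φ^[j] P) = logDist pl (φ P) P) := by
  have hn₀ : 0 < n := hn ▸ Function.minimalPeriod_pos_of_mem_periodicPts hP
  have hper : Function.IsPeriodicPt φ n P := hn ▸ Function.isPeriodicPt_minimalPeriod φ P
  have hφ := logDist_le_logDist_apply pl hgood
  exact ⟨fun i j k => (hper.dist_iterate_add_iterate_add hφ hn₀ i j k).symm,
    fun i j hij => hper.dist_iterate_iterate_of_gcd_eq_one hφ (logDist_comm pl)
      (logDist_triangle pl) hn₀ hij⟩

/-- Proposition 6.1 of Morton–Silverman.  Let `K` be a global field,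
`𝔭` a non-archimedean place of `K`, `φ : ℙ¹ → ℙ¹` a morphism defined over `K` with good
reduction at `𝔭`, and `P ∈ ℙ¹(K)` a periodic point of minimal period `n`.  Then
(i) `δ_𝔭(φ^i(P), φ^j(P)) = δ_𝔭(φ^(i+k)(P), φ^(j+k)(P))` for all `i, j, k ∈ ℕ`; and
(ii) `δ_𝔭(φ^i(P), φ^j(P)) = δ_𝔭(φ(P), P)` whenever `gcd(i - j, n) = 1`. -/
theorem stmt18 (K : Type) [Field K] (hK : IsGlobalField K) (pl : Place K)
    (φ : P1 K → P1 K) (hφ : IsEndo φ) (hgood : GoodReduction pl φ)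
    (P : P1 K) (hP : PeriodicPt φ P)
    (n : ℕ) (hn : n = Function.minimalPeriod φ P) :
    (∀ i j k : ℕ,
        logDist pl (φ^[i] P) (φ^[j] P) = logDist pl (φ^[i + k] P) (φ^[j + k] P)) ∧
      (∀ i j : ℕ, Int.gcd ((i : ℤ) - (j : ℤ)) (n : ℤ) = 1 →
        logDist pl (φ^[i] P) (φ^[j] P) = logDist pl (φ P) P) :=
  stmt18_general K pl φ hgood P hP n hn

end ArxivPreper
end

section
/- Let K be a global field, 𝔭 a non-archimedean place of K with residue field k(𝔭) of characteristic p, and φ an endomorphism of P^1 of degree at least 2 defined over K with good reduction at 𝔭. Let P ∈ P^1(K) be a periodic point for φ with minimal period n, let m be the minimal period of the reduction P̃ of P modulo 𝔭 for the reduced map φ_𝔭, and let r be the multiplicative order of (φ^m)'(P) in k(𝔭) \ {0} (with r = ∞ if (φ^m)'(P) ≡ 0 mod 𝔭). Then one of the following holds: (i) n = m; (ii) n = mr; (iii) n = p^e m r for some integer e ≥ 1. -/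
/-!
Common definitions used to formalize the statements of
"Preperiodic points for rational functions defined over a global field
in terms of good reduction" (arXiv:1403.2293).

* A (normalized, non-archimedean) place of a field `K` is modeled as a surjective
  discrete valuation `v : K → ℤ` (with the junk convention `v 0 = 0`).
* `P1 K` is the projective line over `K`; a point `[x : y]` is `P1.mk x y _`.
* An endomorphism of `P1` defined over `K` is a map `φ : P1 K → P1 K` admitting a
  lift by a pair of binary forms of a common degree `d`, given through their
  coefficient vectors, with nonvanishing resultant (the resultant is defined as
  the determinant of the Sylvester matrix).
* `φ` has good reduction at a place `pl` if it admits a lift whose coefficients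
  are `pl`-integral and whose resultant is a `pl`-unit.
* `logDist` is the `𝔭`-adic logarithmic distance `δ_𝔭`; two points of `P1 K` have
  the same reduction modulo `pl` if and only if `0 < logDist pl P Q`.
* The multiplier of a fixed point `[x:y]` of a map lifted by the forms `(a, b)` of
  degree `d` is computed by the trace formula
  `λ = (∂F/∂x (x,y) + ∂G/∂y (x,y) - d⬝c)/c`, where `c` is the scalar with
  `F(x,y) = c⬝x` and `G(x,y) = c⬝y`.
-/

namespace ArxivPreper

variable {K : Type*} [Field K]

/-!
Good reduction makes `φ` respect the relation "same reduction modulo `𝔭`", so `m ∣ n` and `P`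
has exact period `k = n / m` under `ψ = φ^m`, whose reduction fixes `P̃`. In an affine coordinate
`z` in which `P = [x : y]` with `y` a unit (swap the coordinates if need be), `ψ` becomes
`f z = y F(z, y) / G(z, y)`; it maps the residue disk `D` of `x` to itself, and its difference
quotients `(f z - f w) / (z - w)` on `D` are integral with reduction `λ = (φ^m)'(P̃)`. Hence
`f^j x - x = (f x - x) S_j` with `S_j ≡ 1 + λ + ⋯ + λ^(j-1)`, and `f^k x = x ≠ f x` forces
`1 + λ + ⋯ + λ^(k-1) ≡ 0` when `k ≥ 2`. So `λ^k = 1`, the order `r` of `λ` divides `k`, and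
`f^r` has difference quotients reducing to `1`; for such a map the same identity gives `k ≡ 0`,
i.e. `p ∣ k`, and induction through `f^p` shows that its period is a power of `p`.
-/

open Function Finset

section Periods

variable {α β : Type*}

theorem dvd_minimalPeriod_of_equivalence {f : α → α} {R : α → α → Prop} (hR : Equivalence R)
    (hf : ∀ {a b}, R a b → R (f a) (f b)) {x : α} {m : ℕ} (hm : 0 < m) (hmx : R (f^[m] x) x)
    (hmin : ∀ m', 0 < m' → m' < m → ¬ R (f^[m'] x) x) : m ∣ minimalPeriod f x := by
  have hiter : ∀ j {a b}, R a b → R (f^[j] a) (f^[j] b) := by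
    intro j
    induction j with
    | zero => exact id
    | succ j ih => exact fun h => by simpa only [iterate_succ_apply'] using hf (ih h)
  have hmul : ∀ i, R (f^[i * m] x) x := by
    intro i
    induction i with
    | zero => simpa using hR.refl x
    | succ i ih =>
      rw [Nat.succ_mul, iterate_add_apply]
      exact hR.trans (hiter _ hmx) ih
  set n := minimalPeriod f x
  have hrem : R (f^[n % m] x) x := by
    have := hiter (n % m) (hmul (n / m))
    rw [← iterate_add_apply, Nat.mod_add_div', iterate_minimalPeriod] at this
    exact hR.symm this
  by_contra hdvd
  exact hmin _ (Nat.pos_of_ne_zero fun h => hdvd (Nat.dvd_of_mod_eq_zero h)) (Nat.mod_lt _ hm) hrem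

theorem minimalPeriod_eq_of_semiconj_on {f : α → α} {g : β → β} {ι : α → β}
    (hι : Injective ι) {D : Set α} (hD : Set.MapsTo f D D) (hconj : ∀ z ∈ D, g (ι z) = ι (f z))
    {x : α} (hx : x ∈ D) : minimalPeriod g (ι x) = minimalPeriod f x := by
  have hit : ∀ j, g^[j] (ι x) = ι (f^[j] x) := by
    intro j
    induction j with
    | zero => rfl
    | succ j ih => rw [iterate_succ_apply', ih, hconj _ (hD.iterate j hx), iterate_succ_apply']
  refine minimalPeriod_eq_minimalPeriod_iff.2 fun j => ?_
  simp only [IsPeriodicPt, IsFixedPt, hit, hι.eq_iff]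

end Periods

section DiskDynamics

variable {L k : Type*} [CommRing L] [CommRing k] {A : Subring L}

def HasDiffQuotientOn (π : A →+* k) (D : Set L) (f : L → L) (μ : k) : Prop :=
  Set.MapsTo f D D ∧ ∀ z ∈ D, ∀ w ∈ D, ∃ e : A, f z - f w = (z - w) * e ∧ π e = μ

namespace HasDiffQuotientOn

variable {π : A →+* k} {D : Set L} {f : L → L} {μ : k} {x : L}

theorem iterate (h : HasDiffQuotientOn π D f μ) (j : ℕ) :
    HasDiffQuotientOn π D f^[j] (μ ^ j) := by
  induction j with
  | zero => exact ⟨Set.mapsTo_id D, fun z _ w _ => ⟨1, by simp, by simp⟩⟩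
  | succ j ih =>
    refine ⟨h.1.iterate (j + 1), fun z hz w hw => ?_⟩
    obtain ⟨e, he, hπe⟩ := h.2 z hz w hw
    obtain ⟨e', he', hπe'⟩ := ih.2 (f z) (h.1 hz) (f w) (h.1 hw)
    refine ⟨e * e', ?_, by rw [map_mul, hπe, hπe', pow_succ']⟩
    rw [iterate_succ_apply, iterate_succ_apply, he', he, Subring.coe_mul]
    ring

theorem exists_iterate_sub_eq (h : HasDiffQuotientOn π D f μ) (hx : x ∈ D) (j : ℕ) :
    ∃ S : A, f^[j] x - x = (f x - x) * S ∧ π S = ∑ i ∈ range j, μ ^ i := by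
  induction j with
  | zero => exact ⟨0, by simp, by simp⟩
  | succ j ih =>
    obtain ⟨S, hS, hπS⟩ := ih
    obtain ⟨e, he, hπe⟩ := (h.iterate j).2 (f x) (h.1 hx) x hx
    refine ⟨S + e, ?_, by rw [map_add, hπS, hπe, sum_range_succ]⟩
    rw [iterate_succ_apply, Subring.coe_add]
    linear_combination hS + he

theorem geom_sum_eq_zero [IsDomain L] (h : HasDiffQuotientOn π D f μ) (hx : x ∈ D)
    (hk : 2 ≤ minimalPeriod f x) : ∑ i ∈ range (minimalPeriod f x), μ ^ i = 0 := by
  obtain ⟨S, hS, hπS⟩ := h.exists_iterate_sub_eq hx (minimalPeriod f x)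
  have hfx : f x - x ≠ 0 := sub_ne_zero.2 fun hfix => by
    rw [minimalPeriod_eq_one_iff_isFixedPt.2 hfix] at hk
    omega
  rw [iterate_minimalPeriod, sub_self, eq_comm, mul_eq_zero, or_iff_right hfx,
    ZeroMemClass.coe_eq_zero] at hS
  rw [← hπS, hS, map_zero]

theorem minimalPeriod_eq_pow_of_eq_one [IsDomain L] {p : ℕ} [CharP k p] (hp : 1 < p)
    (h : HasDiffQuotientOn π D f 1) (hx : x ∈ D) (hpos : 0 < minimalPeriod f x) :
    ∃ e, minimalPeriod f x = p ^ e := by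
  induction hn : minimalPeriod f x using Nat.strong_induction_on generalizing f with
  | _ n ih =>
    rcases Nat.lt_or_ge n 2 with hn2 | hn2
    · exact ⟨0, by rw [pow_zero]; omega⟩
    have hpn : p ∣ n := by
      have := h.geom_sum_eq_zero hx (hn ▸ hn2)
      simpa [hn, CharP.cast_eq_zero_iff k p] using this
    have hnp : minimalPeriod f^[p] x = n / p := by
      rw [minimalPeriod_iterate_eq_div_gcd (by omega), hn, Nat.gcd_eq_right hpn]
    obtain ⟨e, he⟩ := ih (n / p) (Nat.div_lt_self (by omega) hp) (by simpa using h.iterate p)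
      (by rw [hnp]; exact Nat.div_pos (Nat.le_of_dvd (by omega) hpn) (by omega)) hnp
    exact ⟨e + 1, by rw [pow_succ, ← he, Nat.div_mul_cancel hpn]⟩

theorem minimalPeriod_eq_one_or [IsDomain L] {p : ℕ} [CharP k p] (hp : 1 < p)
    (h : HasDiffQuotientOn π D f μ) (hx : x ∈ D) (hpos : 0 < minimalPeriod f x) :
    minimalPeriod f x = 1 ∨ 0 < orderOf μ ∧ ∃ e, minimalPeriod f x = p ^ e * orderOf μ := by
  set n := minimalPeriod f x with hn
  rcases Nat.lt_or_ge n 2 with hn2 | hn2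
  · exact Or.inl (by omega)
  have hμn : μ ^ n = 1 := by
    rw [← sub_eq_zero, ← geom_sum_mul, h.geom_sum_eq_zero hx hn2, zero_mul]
  have hr : 0 < orderOf μ := orderOf_pos_iff.2 (isOfFinOrder_iff_pow_eq_one.2 ⟨n, by omega, hμn⟩)
  have hrn : orderOf μ ∣ n := orderOf_dvd_of_pow_eq_one hμn
  have hnr : minimalPeriod f^[orderOf μ] x = n / orderOf μ := by
    rw [minimalPeriod_iterate_eq_div_gcd hr.ne', Nat.gcd_eq_right hrn]
  obtain ⟨e, he⟩ := minimalPeriod_eq_pow_of_eq_one hp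
    (by simpa [pow_orderOf_eq_one] using h.iterate (orderOf μ)) hx
    (by rw [hnr]; exact Nat.div_pos (Nat.le_of_dvd hpos hrn) hr)
  exact Or.inr ⟨hr, e, by rw [← he, hnr, Nat.div_mul_cancel hrn]⟩

end HasDiffQuotientOn

end DiskDynamics

section Forms

theorem formEval_mul_mul (d : ℕ) (a : Fin (d + 1) → K) (t u v : K) :
    formEval d a (t * u) (t * v) = t ^ d * formEval d a u v := by
  unfold formEval
  rw [mul_sum]
  refine sum_congr rfl fun i _ => ?_
  have ht : t ^ (i : ℕ) * t ^ (d - i) = t ^ d := by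
    rw [← pow_add, Nat.add_sub_cancel' (Nat.lt_succ_iff.1 i.2)]
  linear_combination (a i * u ^ (i : ℕ) * v ^ (d - i)) * ht

theorem formEval_euler (d : ℕ) (a : Fin (d + 1) → K) (x y : K) :
    x * formEvalDx d a x y + y * formEvalDy d a x y = d * formEval d a x y := by
  have hpred : ∀ (z : K) (n : ℕ), z * ((n : K) * z ^ (n - 1)) = n * z ^ n := by
    rintro z (_ | n)
    · simp
    · rw [Nat.add_sub_cancel, pow_succ]
      push_cast
      ring
  unfold formEval formEvalDx formEvalDy
  simp only [mul_sum, ← sum_add_distrib]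
  refine sum_congr rfl fun i _ => ?_
  have hi : (i : ℕ) ≤ d := Nat.lt_succ_iff.1 i.2
  linear_combination (a i * y ^ (d - (i : ℕ))) * hpred x i +
    (a i * x ^ (i : ℕ)) * hpred y (d - i) +
    (a i * x ^ (i : ℕ) * y ^ (d - (i : ℕ))) * Nat.cast_sub (R := K) hi

/-- `(F(z, y) - F(w, y)) / (z - w)` for the form `F` with coefficients `a`, as a polynomial
in `z` and `w`. -/
def formDiff (d : ℕ) (a : Fin (d + 1) → K) (y z w : K) : K :=
  ∑ i : Fin (d + 1), a i * (∑ t ∈ range i, z ^ t * w ^ ((i : ℕ) - 1 - t)) * y ^ (d - (i : ℕ))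

theorem formEval_sub_formEval (d : ℕ) (a : Fin (d + 1) → K) (y z w : K) :
    formEval d a z y - formEval d a w y = (z - w) * formDiff d a y z w := by
  unfold formEval formDiff
  rw [← sum_sub_distrib, mul_sum]
  refine sum_congr rfl fun i _ => ?_
  linear_combination (-(a i * y ^ (d - (i : ℕ)))) * geom_sum₂_mul z w i

theorem formDiff_self (d : ℕ) (a : Fin (d + 1) → K) (x y : K) :
    formDiff d a y x x = formEvalDx d a x y := by
  unfold formDiff formEvalDx
  refine sum_congr rfl fun i _ => ?_
  rw [geom_sum₂_self]
  ring

/-- The coefficient vector of `(u, v) ↦ F(v, u)`. -/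
def revc (d : ℕ) (a : Fin (d + 1) → K) : Fin (d + 1) → K := fun i => a i.rev

theorem sum_fin_rev {M : Type*} [AddCommMonoid M] {d : ℕ} (g : Fin (d + 1) → ℕ → ℕ → M) :
    ∑ i : Fin (d + 1), g i.rev i (d - i) = ∑ i : Fin (d + 1), g i (d - i) i := by
  rw [← Equiv.sum_comp Fin.revPerm]
  refine sum_congr rfl fun i _ => ?_
  simp only [Fin.revPerm_apply, Fin.rev_rev, Fin.val_rev]
  congr 1 <;> omega

theorem formEval_revc (d : ℕ) (a : Fin (d + 1) → K) (u v : K) :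
    formEval d (revc d a) u v = formEval d a v u := by
  unfold formEval revc
  rw [sum_fin_rev (fun j p q => a j * u ^ p * v ^ q)]
  exact sum_congr rfl fun i _ => by ring

theorem multiplier_revc (d : ℕ) (a b : Fin (d + 1) → K) (x y c : K) :
    multiplier d (revc d b) (revc d a) y x c = multiplier d a b x y c := by
  have hDx : formEvalDx d (revc d b) y x = formEvalDy d b x y := by
    unfold formEvalDx formEvalDy revc
    rw [sum_fin_rev (fun j p q => (p : K) * b j * y ^ (p - 1) * x ^ q)]
    exact sum_congr rfl fun i _ => by ring
  have hDy : formEvalDy d (revc d a) y x = formEvalDx d a x y := by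
    unfold formEvalDx formEvalDy revc
    rw [sum_fin_rev (fun j p q => ((d - p : ℕ) : K) * a j * y ^ p * x ^ (d - p - 1))]
    refine sum_congr rfl fun i _ => ?_
    rw [Nat.sub_sub_self (Nat.lt_succ_iff.1 i.2)]
    ring
  unfold multiplier
  rw [hDx, hDy, add_comm (formEvalDy d b x y)]

end Forms

section Resultant

theorem sum_band_mul {N d s e : ℕ} (hse : e = s + d) (hN : e < N) (c : Fin (d + 1) → K)
    (g : ℕ → K) :
    ∑ j : Fin N, (if h : s ≤ (j : ℕ) ∧ (j : ℕ) ≤ e then c ⟨j - s, by omega⟩ else 0) * g j =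
      ∑ t : Fin (d + 1), c t * g (s + t) := by
  symm
  refine Fintype.sum_of_injective (fun t : Fin (d + 1) => (⟨s + t, by omega⟩ : Fin N))
    (fun t t' htt => Fin.ext (by simpa using htt)) _ _ (fun j hj => ?_) (fun t => ?_)
  · rw [dif_neg, zero_mul]
    rintro ⟨h1, h2⟩
    exact hj ⟨⟨j - s, by omega⟩, Fin.ext (by simp only; omega)⟩
  · rw [dif_pos (by simp only [le_add_iff_nonneg_right, zero_le, true_and]; omega)]
    simp

theorem sylvester_mulVec_eq_zero {d : ℕ} {a b : Fin (d + 1) → K} {u v : K}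
    (hF : formEval d a u v = 0) (hG : formEval d b u v = 0) :
    (sylvester d a b).mulVec (fun j : Fin (d + d) => u ^ (j : ℕ) * v ^ (d + d - 1 - j)) = 0 := by
  ext i
  simp only [Matrix.mulVec, dotProduct, sylvester, Matrix.of_apply, Pi.zero_apply]
  set g : ℕ → K := fun j => u ^ j * v ^ (d + d - 1 - j)
  split_ifs with hi
  · rw [sum_band_mul (s := i) rfl (by omega) a g, ← mul_zero (u ^ (i : ℕ) * v ^ (d - 1 - i)),
      ← hF, formEval, mul_sum]
    refine sum_congr rfl fun t _ => ?_
    dsimp only [g]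
    rw [show d + d - 1 - (i + t) = (d - 1 - i) + (d - t) by omega, pow_add, pow_add]
    ring
  · rw [sum_band_mul (s := i - d) (e := i) (by omega) (by omega) b g,
      ← mul_zero (u ^ (i - d : ℕ) * v ^ (d + d - 1 - i)), ← hG, formEval, mul_sum]
    refine sum_congr rfl fun t _ => ?_
    dsimp only [g]
    rw [show d + d - 1 - (i - d + t) = (d + d - 1 - i) + (d - t) by omega, pow_add, pow_add]
    ring

theorem resultant_eq_zero_of_formEval_eq_zero {d : ℕ} (hd : 1 ≤ d) {a b : Fin (d + 1) → K}
    {u v : K} (huv : ¬(u = 0 ∧ v = 0)) (hF : formEval d a u v = 0)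
    (hG : formEval d b u v = 0) : resultant d a b = 0 := by
  classical
  refine Matrix.exists_mulVec_eq_zero_iff.1 ⟨_, fun h0 => ?_, sylvester_mulVec_eq_zero hF hG⟩
  by_cases hu : u = 0
  · have := congrFun h0 ⟨0, by omega⟩
    simp_all
  · have := congrFun h0 ⟨d + d - 1, by omega⟩
    simp_all

end Resultant

section Reduction

variable (pl : Place K)

theorem Place.v_inv {x : K} (hx : x ≠ 0) : pl.v x⁻¹ = -pl.v x := by
  have := pl.v_mul x x⁻¹ hx (inv_ne_zero hx)
  rw [mul_inv_cancel₀ hx, pl.v_one] at this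
  omega

theorem mem_integersAt {x : K} : x ∈ integersAt pl ↔ 0 ≤ pl.v x := Iff.rfl

instance : (maxIdealAt pl).IsMaximal := by
  refine Ideal.isMaximal_iff.2 ⟨fun h => ?_, fun J x hle hx hxJ => ?_⟩
  · rcases h with h | h
    · exact one_ne_zero h
    · exact (lt_irrefl 0) (pl.v_one ▸ h)
  · have hx0 : (x : K) ≠ 0 := fun h => hx (Or.inl h)
    have hv : pl.v x = 0 := le_antisymm (not_lt.1 fun h => hx (Or.inr h)) x.2
    have hinv : (x : K)⁻¹ ∈ integersAt pl := by
      rw [mem_integersAt, pl.v_inv hx0, hv, neg_zero]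
    convert J.mul_mem_left ⟨_, hinv⟩ hxJ
    exact Subtype.ext (inv_mul_cancel₀ hx0).symm

noncomputable instance : Field (Residue pl) := Ideal.Quotient.field (maxIdealAt pl)

noncomputable def residueMap : integersAt pl →+* Residue pl := Ideal.Quotient.mk (maxIdealAt pl)

open Classical in
/-- Reduction modulo `𝔭`; its value `0` off `R_𝔭` is junk. -/
noncomputable def red (x : K) : Residue pl :=
  if h : x ∈ integersAt pl then residueMap pl ⟨x, h⟩ else 0

variable {pl} {x y : K}

theorem red_of_mem (h : x ∈ integersAt pl) : red pl x = residueMap pl ⟨x, h⟩ := dif_pos h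

theorem red_coe (r : integersAt pl) : red pl r = residueMap pl r := red_of_mem r.2

theorem red_add (hx : x ∈ integersAt pl) (hy : y ∈ integersAt pl) :
    red pl (x + y) = red pl x + red pl y := by
  rw [red_of_mem (add_mem hx hy), red_of_mem hx, red_of_mem hy, ← map_add]
  rfl

theorem red_sub (hx : x ∈ integersAt pl) (hy : y ∈ integersAt pl) :
    red pl (x - y) = red pl x - red pl y := by
  rw [red_of_mem (sub_mem hx hy), red_of_mem hx, red_of_mem hy, ← map_sub]
  rfl

theorem red_mul (hx : x ∈ integersAt pl) (hy : y ∈ integersAt pl) :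
    red pl (x * y) = red pl x * red pl y := by
  rw [red_of_mem (mul_mem hx hy), red_of_mem hx, red_of_mem hy, ← map_mul]
  rfl

theorem red_pow (hx : x ∈ integersAt pl) (n : ℕ) : red pl (x ^ n) = red pl x ^ n := by
  rw [red_of_mem (pow_mem hx n), red_of_mem hx, ← map_pow]
  rfl

theorem red_natCast (n : ℕ) : red pl (n : K) = n := by
  rw [red_of_mem (natCast_mem _ n), ← map_natCast (residueMap pl) n]
  rfl

theorem red_zero : red pl (0 : K) = 0 := by
  simpa using red_natCast (pl := pl) 0

theorem red_one : red pl (1 : K) = 1 := by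
  simpa using red_natCast (pl := pl) 1

theorem red_sum {ι : Type*} (s : Finset ι) {f : ι → K} (hf : ∀ i ∈ s, f i ∈ integersAt pl) :
    red pl (∑ i ∈ s, f i) = ∑ i ∈ s, red pl (f i) := by
  classical
  induction s using Finset.induction_on with
  | empty => simpa using red_zero
  | insert i s hi ih =>
    rw [sum_insert hi, sum_insert hi, red_add (hf i (mem_insert_self i s))
      (sum_mem fun j hj => hf j (mem_insert_of_mem hj)),
      ih fun j hj => hf j (mem_insert_of_mem hj)]

theorem red_eq_zero_iff (hx : x ∈ integersAt pl) : red pl x = 0 ↔ x = 0 ∨ 0 < pl.v x := by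
  rw [red_of_mem hx]
  exact Ideal.Quotient.eq_zero_iff_mem

theorem red_eq_red_iff (hx : x ∈ integersAt pl) (hy : y ∈ integersAt pl) :
    red pl x = red pl y ↔ x - y = 0 ∨ 0 < pl.v (x - y) := by
  rw [← sub_eq_zero, ← red_sub hx hy, red_eq_zero_iff (sub_mem hx hy)]

theorem red_ne_zero_iff (hx : x ∈ integersAt pl) : red pl x ≠ 0 ↔ x ≠ 0 ∧ pl.v x = 0 := by
  rw [Ne, red_eq_zero_iff hx, not_or, not_lt, and_congr_right_iff]
  exact fun _ => ⟨fun h => le_antisymm h hx, le_of_eq⟩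

theorem ne_zero_of_red_ne_zero (h : red pl x ≠ 0) : x ≠ 0 := by
  rintro rfl
  exact h red_zero

theorem div_mem_integersAt (hx : x ∈ integersAt pl) (hy : y ∈ integersAt pl)
    (hy0 : red pl y ≠ 0) : x / y ∈ integersAt pl := by
  obtain ⟨hy0, hvy⟩ := (red_ne_zero_iff hy).1 hy0
  refine div_eq_mul_inv x y ▸ mul_mem hx ?_
  rw [mem_integersAt, pl.v_inv hy0, hvy, neg_zero]

theorem red_div (hx : x ∈ integersAt pl) (hy : y ∈ integersAt pl) (hy0 : red pl y ≠ 0) :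
    red pl (x / y) = red pl x / red pl y := by
  rw [eq_div_iff hy0, ← red_mul (div_mem_integersAt hx hy hy0) hy,
    div_mul_cancel₀ _ (ne_zero_of_red_ne_zero hy0)]

end Reduction

section ReducedForms

variable {pl : Place K} {d : ℕ} {a b : Fin (d + 1) → K} {u v : K}

theorem formEval_mem (ha : ∀ i, a i ∈ integersAt pl) (hu : u ∈ integersAt pl)
    (hv : v ∈ integersAt pl) : formEval d a u v ∈ integersAt pl :=
  sum_mem fun i _ => mul_mem (mul_mem (ha i) (pow_mem hu _)) (pow_mem hv _)

theorem formEvalDx_mem (ha : ∀ i, a i ∈ integersAt pl) (hu : u ∈ integersAt pl)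
    (hv : v ∈ integersAt pl) : formEvalDx d a u v ∈ integersAt pl :=
  sum_mem fun i _ => mul_mem (mul_mem (mul_mem (natCast_mem _ _) (ha i)) (pow_mem hu _))
    (pow_mem hv _)

theorem formEvalDy_mem (ha : ∀ i, a i ∈ integersAt pl) (hu : u ∈ integersAt pl)
    (hv : v ∈ integersAt pl) : formEvalDy d a u v ∈ integersAt pl :=
  sum_mem fun i _ => mul_mem (mul_mem (mul_mem (natCast_mem _ _) (ha i)) (pow_mem hu _))
    (pow_mem hv _)

theorem formDiff_mem (ha : ∀ i, a i ∈ integersAt pl) {y z w : K} (hy : y ∈ integersAt pl)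
    (hz : z ∈ integersAt pl) (hw : w ∈ integersAt pl) : formDiff d a y z w ∈ integersAt pl :=
  sum_mem fun i _ => mul_mem (mul_mem (ha i)
    (sum_mem fun _ _ => mul_mem (pow_mem hz _) (pow_mem hw _))) (pow_mem hy _)

theorem red_formEval (ha : ∀ i, a i ∈ integersAt pl) (hu : u ∈ integersAt pl)
    (hv : v ∈ integersAt pl) :
    red pl (formEval d a u v) = formEval d (fun i => red pl (a i)) (red pl u) (red pl v) := by
  rw [formEval, red_sum _ fun i _ => mul_mem (mul_mem (ha i) (pow_mem hu _)) (pow_mem hv _)]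
  refine sum_congr rfl fun i _ => ?_
  rw [red_mul (mul_mem (ha i) (pow_mem hu _)) (pow_mem hv _), red_mul (ha i) (pow_mem hu _),
    red_pow hu, red_pow hv]

theorem red_formEvalDx (ha : ∀ i, a i ∈ integersAt pl) (hu : u ∈ integersAt pl)
    (hv : v ∈ integersAt pl) :
    red pl (formEvalDx d a u v) = formEvalDx d (fun i => red pl (a i)) (red pl u) (red pl v) := by
  rw [formEvalDx, red_sum _ fun i _ => mul_mem (mul_mem (mul_mem (natCast_mem _ _) (ha i))
    (pow_mem hu _)) (pow_mem hv _)]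
  refine sum_congr rfl fun i _ => ?_
  rw [red_mul (mul_mem (mul_mem (natCast_mem _ _) (ha i)) (pow_mem hu _)) (pow_mem hv _),
    red_mul (mul_mem (natCast_mem _ _) (ha i)) (pow_mem hu _),
    red_mul (natCast_mem _ _) (ha i), red_natCast, red_pow hu, red_pow hv]

theorem red_formEvalDy (ha : ∀ i, a i ∈ integersAt pl) (hu : u ∈ integersAt pl)
    (hv : v ∈ integersAt pl) :
    red pl (formEvalDy d a u v) = formEvalDy d (fun i => red pl (a i)) (red pl u) (red pl v) := by
  rw [formEvalDy, red_sum _ fun i _ => mul_mem (mul_mem (mul_mem (natCast_mem _ _) (ha i))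
    (pow_mem hu _)) (pow_mem hv _)]
  refine sum_congr rfl fun i _ => ?_
  rw [red_mul (mul_mem (mul_mem (natCast_mem _ _) (ha i)) (pow_mem hu _)) (pow_mem hv _),
    red_mul (mul_mem (natCast_mem _ _) (ha i)) (pow_mem hu _),
    red_mul (natCast_mem _ _) (ha i), red_natCast, red_pow hu, red_pow hv]

theorem red_formDiff (ha : ∀ i, a i ∈ integersAt pl) {y z w : K} (hy : y ∈ integersAt pl)
    (hz : z ∈ integersAt pl) (hw : w ∈ integersAt pl) :
    red pl (formDiff d a y z w) =
      formDiff d (fun i => red pl (a i)) (red pl y) (red pl z) (red pl w) := by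
  have hgeom : ∀ n : ℕ, ∑ t ∈ range n, z ^ t * w ^ (n - 1 - t) ∈ integersAt pl :=
    fun n => sum_mem fun t _ => mul_mem (pow_mem hz _) (pow_mem hw _)
  rw [formDiff, red_sum _ fun i _ => mul_mem (mul_mem (ha i) (hgeom i)) (pow_mem hy _)]
  refine sum_congr rfl fun i _ => ?_
  rw [red_mul (mul_mem (ha i) (hgeom i)) (pow_mem hy _), red_mul (ha i) (hgeom i), red_pow hy,
    red_sum _ fun t _ => mul_mem (pow_mem hz _) (pow_mem hw _)]
  congr 2
  exact sum_congr rfl fun _ _ => by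
    rw [red_mul (pow_mem hz _) (pow_mem hw _), red_pow hz, red_pow hw]

theorem multiplier_mem (ha : ∀ i, a i ∈ integersAt pl) (hb : ∀ i, b i ∈ integersAt pl)
    {x y c : K} (hx : x ∈ integersAt pl) (hy : y ∈ integersAt pl) (hc : c ∈ integersAt pl)
    (hc0 : red pl c ≠ 0) : multiplier d a b x y c ∈ integersAt pl :=
  div_mem_integersAt (sub_mem (add_mem (formEvalDx_mem ha hx hy) (formEvalDy_mem hb hx hy))
    (mul_mem (natCast_mem _ _) hc)) hc hc0

theorem red_multiplier (ha : ∀ i, a i ∈ integersAt pl) (hb : ∀ i, b i ∈ integersAt pl)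
    {x y c : K} (hx : x ∈ integersAt pl) (hy : y ∈ integersAt pl) (hc : c ∈ integersAt pl)
    (hc0 : red pl c ≠ 0) :
    red pl (multiplier d a b x y c) = multiplier d (fun i => red pl (a i))
      (fun i => red pl (b i)) (red pl x) (red pl y) (red pl c) := by
  have hDx := formEvalDx_mem ha hx hy
  have hDy := formEvalDy_mem hb hx hy
  rw [multiplier, red_div (sub_mem (add_mem hDx hDy) (mul_mem (natCast_mem _ _) hc)) hc hc0,
    red_sub (add_mem hDx hDy) (mul_mem (natCast_mem _ _) hc), red_add hDx hDy,
    red_mul (natCast_mem _ _) hc, red_natCast, red_formEvalDx ha hx hy,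
    red_formEvalDy hb hx hy, multiplier]

theorem red_det {n : ℕ} {M : Matrix (Fin n) (Fin n) K} (hM : ∀ i j, M i j ∈ integersAt pl) :
    red pl M.det = (M.map (red pl)).det := by
  set MR : Matrix (Fin n) (Fin n) (integersAt pl) := Matrix.of fun i j => ⟨M i j, hM i j⟩
  have hdet : M.det = (MR.det : K) := by
    rw [← Subring.coe_subtype, RingHom.map_det]
    rfl
  rw [hdet, red_coe, RingHom.map_det]
  congr 1
  ext i j
  exact (red_of_mem (hM i j)).symm

theorem red_resultant (ha : ∀ i, a i ∈ integersAt pl) (hb : ∀ i, b i ∈ integersAt pl) :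
    red pl (resultant d a b) = resultant d (fun i => red pl (a i)) (fun i => red pl (b i)) := by
  have hS : ∀ i j, sylvester d a b i j ∈ integersAt pl := by
    intro i j
    simp only [sylvester, Matrix.of_apply]
    split_ifs <;> first | exact ha _ | exact hb _ | exact zero_mem _
  rw [resultant, red_det hS, resultant]
  congr 1
  ext i j
  simp only [sylvester, Matrix.of_apply, Matrix.map_apply]
  split_ifs <;> first | rfl | exact red_zero

end ReducedForms

section ProjectiveLine

theorem P1.mk_eq_mk_iff {u v u' v' : K} (h : ¬(u = 0 ∧ v = 0)) (h' : ¬(u' = 0 ∧ v' = 0)) :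
    P1.mk u v h = P1.mk u' v' h' ↔ u * v' = u' * v := by
  unfold P1.mk
  rw [Projectivization.mk_eq_mk_iff' K _ _]
  constructor
  · rintro ⟨t, ht⟩
    have h0 : t * u' = u := by simpa using congrFun ht 0
    have h1 : t * v' = v := by simpa using congrFun ht 1
    rw [← h0, ← h1]
    ring
  · intro huv
    by_cases hu' : u' = 0
    · have hv' : v' ≠ 0 := fun hv' => h' ⟨hu', hv'⟩
      have hu : u = 0 := by simpa [hu', hv'] using huv
      exact ⟨v / v', by ext i; fin_cases i <;> simp [hu, hu', hv']⟩
    · refine ⟨u / u', ?_⟩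
      ext i; fin_cases i
      · simp [hu']
      · simp only [Fin.mk_one, Pi.smul_apply, Matrix.cons_val_one, Matrix.cons_val_fin_one,
          smul_eq_mul]
        field_simp
        linear_combination huv

theorem P1.mk_left_injective {y : K} (hy : y ≠ 0) :
    Injective fun z : K => P1.mk z y fun h => hy h.2 := fun z z' hz => by
  simpa [hy] using (P1.mk_eq_mk_iff _ _).1 hz

theorem P1.mk_right_injective {x : K} (hx : x ≠ 0) :
    Injective fun z : K => P1.mk x z fun h => hx h.1 := fun z z' hz => by
  have := (P1.mk_eq_mk_iff _ _).1 hz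
  exact (mul_right_injective₀ hx this).symm

theorem P1.exists_mk_eq (Q : P1 K) : ∃ (u v : K) (h : ¬(u = 0 ∧ v = 0)), Q = P1.mk u v h := by
  induction Q using Projectivization.ind with
  | h w hw =>
    refine ⟨w 0, w 1, fun h => hw ?_, ?_⟩
    · ext i; fin_cases i <;> simp [h.1, h.2]
    · unfold P1.mk
      congr
      ext i; fin_cases i <;> rfl

theorem P1.rep_mk {u v : K} (h : ¬(u = 0 ∧ v = 0)) :
    ∃ t : K, t ≠ 0 ∧ (P1.mk u v h).rep 0 = t * u ∧ (P1.mk u v h).rep 1 = t * v := by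
  obtain ⟨t, ht⟩ := Projectivization.exists_smul_eq_mk_rep K ![u, v] (by simpa [funext_iff] using h)
  refine ⟨t, t.ne_zero, ?_, ?_⟩
  · simpa [P1.mk, Units.smul_def] using (congrFun ht 0).symm
  · simpa [P1.mk, Units.smul_def] using (congrFun ht 1).symm

end ProjectiveLine

section SameReduction

variable {pl : Place K}

def IsPrimitiveAt (pl : Place K) (u v : K) : Prop :=
  u ∈ integersAt pl ∧ v ∈ integersAt pl ∧ ¬(red pl u = 0 ∧ red pl v = 0)

theorem IsPrimitiveAt.ne_zero {u v : K} (h : IsPrimitiveAt pl u v) : ¬(u = 0 ∧ v = 0) := by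
  rintro ⟨rfl, rfl⟩
  exact h.2.2 ⟨red_zero, red_zero⟩

theorem IsPrimitiveAt.exists_unit {u v : K} (h : IsPrimitiveAt pl u v) :
    (u ≠ 0 ∧ pl.v u = 0) ∨ (v ≠ 0 ∧ pl.v v = 0) := by
  rw [← red_ne_zero_iff h.1, ← red_ne_zero_iff h.2.1]
  exact not_and_or.1 h.2.2

theorem vminVec_of_isPrimitiveAt {t u v : K} (ht : t ≠ 0) (h : IsPrimitiveAt pl u v)
    {w : Fin 2 → K} (hw0 : w 0 = t * u) (hw1 : w 1 = t * v) : vminVec pl w = pl.v t := by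
  have hu : 0 ≤ pl.v u := h.1
  have hv : 0 ≤ pl.v v := h.2.1
  unfold vminVec
  rw [hw0, hw1]
  rcases h.exists_unit with ⟨hu0, hvu⟩ | ⟨hv0, hvv⟩
  · by_cases hv0 : v = 0
    · simp [hu0, hv0, ht, pl.v_mul t u ht hu0, hvu]
    · simp only [mul_eq_zero, ht, hu0, hv0, or_self, ↓reduceIte, pl.v_mul t u ht hu0,
        pl.v_mul t v ht hv0, hvu, add_zero, inf_eq_left, le_add_iff_nonneg_right]
      omega
  · by_cases hu0 : u = 0
    · simp [hu0, pl.v_mul t v ht hv0, hvv]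
    · simp only [mul_eq_zero, ht, hu0, hv0, or_self, ↓reduceIte, pl.v_mul t u ht hu0,
        pl.v_mul t v ht hv0, hvv, add_zero, inf_eq_right, le_add_iff_nonneg_right]
      omega

theorem div_mem_integersAt_of_v_le {x y : K} (hy : y ≠ 0) (h : x = 0 ∨ pl.v y ≤ pl.v x) :
    x / y ∈ integersAt pl := by
  rcases eq_or_ne x 0 with rfl | hx
  · rw [zero_div]; exact zero_mem _
  · rw [mem_integersAt, div_eq_mul_inv, pl.v_mul x _ hx (inv_ne_zero hy), pl.v_inv hy]
    have := h.resolve_left hx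
    omega

theorem exists_isPrimitiveAt (pl : Place K) (Q : P1 K) :
    ∃ (u v : K) (h : IsPrimitiveAt pl u v), Q = P1.mk u v h.ne_zero := by
  obtain ⟨w₀, w₁, hw, rfl⟩ := P1.exists_mk_eq Q
  have hred1 : red pl (1 : K) ≠ 0 := by rw [red_one]; exact one_ne_zero
  by_cases h₀ : w₀ ≠ 0 ∧ (w₁ = 0 ∨ pl.v w₀ ≤ pl.v w₁)
  · refine ⟨1, w₁ / w₀, ⟨one_mem _, div_mem_integersAt_of_v_le h₀.1 h₀.2, fun h => hred1 h.1⟩, ?_⟩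
    rw [P1.mk_eq_mk_iff]
    field_simp [h₀.1]
  · have h₁ : w₁ ≠ 0 := fun h₁ => h₀ ⟨fun h => hw ⟨h, h₁⟩, Or.inl h₁⟩
    have hle : w₀ = 0 ∨ pl.v w₁ ≤ pl.v w₀ := by
      by_cases hw₀ : w₀ = 0
      · exact Or.inl hw₀
      · exact Or.inr (le_of_lt (not_le.1 fun hle => h₀ ⟨hw₀, Or.inr hle⟩))
    refine ⟨w₀ / w₁, 1, ⟨div_mem_integersAt_of_v_le h₁ hle, one_mem _, fun h => hred1 h.2⟩, ?_⟩
    rw [P1.mk_eq_mk_iff]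
    field_simp [h₁]

def SameReduction (pl : Place K) (P Q : P1 K) : Prop := 0 < logDist pl P Q

theorem sameReduction_mk_iff {u v u' v' : K} (hP : IsPrimitiveAt pl u v)
    (hQ : IsPrimitiveAt pl u' v') :
    SameReduction pl (P1.mk u v hP.ne_zero) (P1.mk u' v' hQ.ne_zero) ↔
      red pl u * red pl v' = red pl u' * red pl v := by
  obtain ⟨t, ht, h₀, h₁⟩ := P1.rep_mk hP.ne_zero
  obtain ⟨s, hs, h₀', h₁'⟩ := P1.rep_mk hQ.ne_zero
  have hD : u * v' - u' * v ∈ integersAt pl := sub_mem (mul_mem hP.1 hQ.2.1) (mul_mem hQ.1 hP.2.1)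
  rw [SameReduction, logDist, h₀, h₁, h₀', h₁', vminVec_of_isPrimitiveAt ht hP h₀ h₁,
    vminVec_of_isPrimitiveAt hs hQ h₀' h₁', ← sub_eq_zero, ← red_mul hP.1 hQ.2.1,
    ← red_mul hQ.1 hP.2.1, ← red_sub (mul_mem hP.1 hQ.2.1) (mul_mem hQ.1 hP.2.1),
    red_eq_zero_iff hD,
    show t * u * (s * v') - s * u' * (t * v) = t * s * (u * v' - u' * v) by ring]
  by_cases hD0 : u * v' - u' * v = 0
  · simp [hD0, extv]
  · rw [extv, if_neg (mul_ne_zero (mul_ne_zero ht hs) hD0), pl.v_mul _ _ (mul_ne_zero ht hs) hD0,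
      pl.v_mul t s ht hs, ← WithTop.coe_add, WithTop.coe_pos]
    simp only [hD0, false_or]
    omega

theorem sameReduction_equivalence (pl : Place K) : Equivalence (SameReduction pl) where
  refl P := by simp [SameReduction, logDist, extv]
  symm {P Q} h := by
    obtain ⟨u, v, hP, rfl⟩ := exists_isPrimitiveAt pl P
    obtain ⟨u', v', hQ, rfl⟩ := exists_isPrimitiveAt pl Q
    rw [sameReduction_mk_iff hP hQ] at h
    rw [sameReduction_mk_iff hQ hP]
    exact h.symm
  trans {P Q R} h h' := by
    obtain ⟨u, v, hP, rfl⟩ := exists_isPrimitiveAt pl P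
    obtain ⟨u', v', hQ, rfl⟩ := exists_isPrimitiveAt pl Q
    obtain ⟨u'', v'', hR, rfl⟩ := exists_isPrimitiveAt pl R
    rw [sameReduction_mk_iff hP hQ] at h
    rw [sameReduction_mk_iff hQ hR] at h'
    rw [sameReduction_mk_iff hP hR]
    rcases not_and_or.1 hQ.2.2 with hu' | hv'
    · refine mul_left_cancel₀ hu' ?_
      linear_combination red pl u * h' + red pl u'' * h
    · refine mul_left_cancel₀ hv' ?_
      linear_combination red pl v * h' + red pl v'' * h

theorem formEval_mul_eq_of_mul_eq {d : ℕ} (a b : Fin (d + 1) → K) {u v u' v' : K}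
    (huv : ¬(u = 0 ∧ v = 0)) (h : u * v' = u' * v) :
    formEval d a u v * formEval d b u' v' = formEval d a u' v' * formEval d b u v := by
  obtain ⟨t, rfl, rfl⟩ : ∃ t, u' = t * u ∧ v' = t * v := by
    by_cases hu : u = 0
    · have hv : v ≠ 0 := fun hv => huv ⟨hu, hv⟩
      refine ⟨v' / v, ?_, by field_simp⟩
      simpa [hu, hv] using h.symm
    · exact ⟨u' / u, by field_simp, by field_simp; linear_combination h⟩
  rw [formEval_mul_mul, formEval_mul_mul]
  ring

theorem IsPrimitiveAt.formEval {d : ℕ} (hd : 1 ≤ d) {a b : Fin (d + 1) → K}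
    (ha : ∀ i, a i ∈ integersAt pl) (hb : ∀ i, b i ∈ integersAt pl)
    (hres : red pl (resultant d a b) ≠ 0) {u v : K} (h : IsPrimitiveAt pl u v) :
    IsPrimitiveAt pl (formEval d a u v) (formEval d b u v) := by
  refine ⟨formEval_mem ha h.1 h.2.1, formEval_mem hb h.1 h.2.1, fun h0 => hres ?_⟩
  rw [red_formEval ha h.1 h.2.1, red_formEval hb h.1 h.2.1] at h0
  rw [red_resultant ha hb]
  exact resultant_eq_zero_of_formEval_eq_zero hd h.2.2 h0.1 h0.2

theorem SameReduction.map_of_isLift {χ : P1 K → P1 K} {d : ℕ} {a b : Fin (d + 1) → K}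
    (hlift : IsLift χ d a b) (ha : ∀ i, a i ∈ integersAt pl) (hb : ∀ i, b i ∈ integersAt pl)
    (hres : pl.v (resultant d a b) = 0) {P Q : P1 K} (h : SameReduction pl P Q) :
    SameReduction pl (χ P) (χ Q) := by
  obtain ⟨u, v, hP, rfl⟩ := exists_isPrimitiveAt pl P
  obtain ⟨u', v', hQ, rfl⟩ := exists_isPrimitiveAt pl Q
  obtain ⟨_, hχP⟩ := hlift.2 u v hP.ne_zero
  obtain ⟨_, hχQ⟩ := hlift.2 u' v' hQ.ne_zero
  rcases Nat.eq_zero_or_pos d with rfl | hd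
  · have hχ : χ (P1.mk u v hP.ne_zero) = χ (P1.mk u' v' hQ.ne_zero) := by
      rw [hχP, hχQ]
      simp [formEval]
    exact hχ ▸ (sameReduction_equivalence pl).refl _
  have hres' : red pl (resultant d a b) ≠ 0 :=
    (red_ne_zero_iff hres.ge).2 ⟨hlift.1, hres⟩
  have himP := hP.formEval hd ha hb hres'
  have himQ := hQ.formEval hd ha hb hres'
  rw [hχP, hχQ, sameReduction_mk_iff himP himQ, red_formEval ha hP.1 hP.2.1,
    red_formEval hb hQ.1 hQ.2.1, red_formEval ha hQ.1 hQ.2.1, red_formEval hb hP.1 hP.2.1]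
  exact formEval_mul_eq_of_mul_eq _ _ hP.2.2 ((sameReduction_mk_iff hP hQ).1 h)

end SameReduction

section Chart

theorem chart_derivative_eq_multiplier {d : ℕ} {a b : Fin (d + 1) → K} {x y c : K}
    (hy : y ≠ 0) (hc : c ≠ 0) (hF : formEval d a x y = c * x) (hG : formEval d b x y = c * y) :
    y * (formEvalDx d a x y * formEval d b x y - formEval d a x y * formEvalDx d b x y) /
      (formEval d b x y * formEval d b x y) = multiplier d a b x y c := by
  have heuler := formEval_euler d b x y
  rw [hG] at heuler
  rw [hF, hG, multiplier]
  field_simp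
  linear_combination -heuler

variable {pl : Place K}

def residueDisk (pl : Place K) (x : K) : Set K := {z | z ∈ integersAt pl ∧ red pl z = red pl x}

/-- The map `[z : y] ↦ [F(z, y) : G(z, y)]` in the affine coordinate `z`. -/
def chartMap (d : ℕ) (a b : Fin (d + 1) → K) (y z : K) : K :=
  y * formEval d a z y / formEval d b z y

theorem chartMap_sub {d : ℕ} (a b : Fin (d + 1) → K) {y z w : K} (hz : formEval d b z y ≠ 0)
    (hw : formEval d b w y ≠ 0) :
    chartMap d a b y z - chartMap d a b y w = (z - w) * (y * (formDiff d a y z w *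
      formEval d b w y - formEval d a w y * formDiff d b y z w) /
        (formEval d b z y * formEval d b w y)) := by
  have hFa := formEval_sub_formEval d a y z w
  have hFb := formEval_sub_formEval d b y z w
  unfold chartMap
  field_simp
  linear_combination (y * formEval d b w y) * hFa - (y * formEval d a w y) * hFb

variable {d : ℕ} {a b : Fin (d + 1) → K} {x y c : K}

theorem red_formEval_of_mem_residueDisk (ha : ∀ i, a i ∈ integersAt pl)
    (hy : y ∈ integersAt pl) {z : K} (hz : z ∈ residueDisk pl x) (hx : x ∈ integersAt pl) :
    red pl (formEval d a z y) = red pl (formEval d a x y) := by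
  rw [red_formEval ha hz.1 hy, red_formEval ha hx hy, hz.2]

theorem red_formDiff_of_mem_residueDisk (ha : ∀ i, a i ∈ integersAt pl)
    (hy : y ∈ integersAt pl) {z w : K} (hz : z ∈ residueDisk pl x) (hw : w ∈ residueDisk pl x)
    (hx : x ∈ integersAt pl) :
    red pl (formDiff d a y z w) = red pl (formEvalDx d a x y) := by
  rw [red_formDiff ha hy hz.1 hw.1, red_formEvalDx ha hx hy, hz.2, hw.2, formDiff_self]

/-- `[x : y]` reduces to a fixed point of `[F : G]`, with `(F, G)(x, y) ≡ c • (x, y)` modulo `𝔭`. -/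
structure IsReducedFixedPt (pl : Place K) (d : ℕ) (a b : Fin (d + 1) → K) (x y c : K) :
    Prop where
  mem_a : ∀ i, a i ∈ integersAt pl
  mem_b : ∀ i, b i ∈ integersAt pl
  mem_x : x ∈ integersAt pl
  mem_y : y ∈ integersAt pl
  mem_c : c ∈ integersAt pl
  red_c_ne_zero : red pl c ≠ 0
  red_formEval_a : red pl (formEval d a x y) = red pl c * red pl x
  red_formEval_b : red pl (formEval d b x y) = red pl c * red pl y

namespace IsReducedFixedPt

theorem of_valuation (ha : ∀ i, a i ∈ integersAt pl) (hb : ∀ i, b i ∈ integersAt pl)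
    (hx : x ∈ integersAt pl) (hy : y ∈ integersAt pl) (hc : c ∈ integersAt pl)
    (hc0 : red pl c ≠ 0)
    (hF : formEval d a x y - c * x = 0 ∨ 0 < pl.v (formEval d a x y - c * x))
    (hG : formEval d b x y - c * y = 0 ∨ 0 < pl.v (formEval d b x y - c * y)) :
    IsReducedFixedPt pl d a b x y c where
  mem_a := ha
  mem_b := hb
  mem_x := hx
  mem_y := hy
  mem_c := hc
  red_c_ne_zero := hc0
  red_formEval_a := by
    rw [← red_mul hc hx, red_eq_red_iff (formEval_mem ha hx hy) (mul_mem hc hx)]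
    exact hF
  red_formEval_b := by
    rw [← red_mul hc hy, red_eq_red_iff (formEval_mem hb hx hy) (mul_mem hc hy)]
    exact hG

theorem swap (h : IsReducedFixedPt pl d a b x y c) :
    IsReducedFixedPt pl d (revc d b) (revc d a) y x c where
  mem_a i := h.mem_b _
  mem_b i := h.mem_a _
  mem_x := h.mem_y
  mem_y := h.mem_x
  mem_c := h.mem_c
  red_c_ne_zero := h.red_c_ne_zero
  red_formEval_a := by rw [formEval_revc, h.red_formEval_b]
  red_formEval_b := by rw [formEval_revc, h.red_formEval_a]

theorem red_formEval_ne_zero (h : IsReducedFixedPt pl d a b x y c) (hy0 : red pl y ≠ 0)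
    {z : K} (hz : z ∈ residueDisk pl x) : red pl (formEval d b z y) ≠ 0 := by
  rw [red_formEval_of_mem_residueDisk h.mem_b h.mem_y hz h.mem_x, h.red_formEval_b]
  exact mul_ne_zero h.red_c_ne_zero hy0

theorem mapsTo_chartMap (h : IsReducedFixedPt pl d a b x y c) (hy0 : red pl y ≠ 0) :
    Set.MapsTo (chartMap d a b y) (residueDisk pl x) (residueDisk pl x) := by
  intro z hz
  have hG0 := h.red_formEval_ne_zero hy0 hz
  have hF := formEval_mem h.mem_a hz.1 h.mem_y
  have hG := formEval_mem h.mem_b hz.1 h.mem_y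
  refine ⟨div_mem_integersAt (mul_mem h.mem_y hF) hG hG0, ?_⟩
  rw [chartMap, red_div (mul_mem h.mem_y hF) hG hG0, red_mul h.mem_y hF,
    red_formEval_of_mem_residueDisk h.mem_a h.mem_y hz h.mem_x,
    red_formEval_of_mem_residueDisk h.mem_b h.mem_y hz h.mem_x, h.red_formEval_a,
    h.red_formEval_b]
  field_simp [h.red_c_ne_zero, hy0]

theorem hasDiffQuotientOn_chartMap (h : IsReducedFixedPt pl d a b x y c)
    (hy0 : red pl y ≠ 0) :
    HasDiffQuotientOn (residueMap pl) (residueDisk pl x) (chartMap d a b y)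
      (red pl (multiplier d a b x y c)) := by
  refine ⟨h.mapsTo_chartMap hy0, fun z hz w hw => ?_⟩
  have hGz0 := h.red_formEval_ne_zero hy0 hz
  have hGw0 := h.red_formEval_ne_zero hy0 hw
  obtain ⟨ha, hb, hx, hy, hc, hc0, hFx, hGx⟩ := h
  have hFw := formEval_mem ha hw.1 hy
  have hGz := formEval_mem hb hz.1 hy
  have hGw := formEval_mem hb hw.1 hy
  have hDa := formDiff_mem ha hy hz.1 hw.1
  have hDb := formDiff_mem hb hy hz.1 hw.1
  have hnum := mul_mem hy (sub_mem (mul_mem hDa hGw) (mul_mem hFw hDb))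
  have hden0 : red pl (formEval d b z y * formEval d b w y) ≠ 0 := by
    rw [red_mul hGz hGw]
    exact mul_ne_zero hGz0 hGw0
  refine ⟨⟨_, div_mem_integersAt hnum (mul_mem hGz hGw) hden0⟩,
    chartMap_sub a b (ne_zero_of_red_ne_zero hGz0) (ne_zero_of_red_ne_zero hGw0), ?_⟩
  rw [← red_coe, red_div hnum (mul_mem hGz hGw) hden0, red_mul hy (sub_mem (mul_mem hDa hGw)
    (mul_mem hFw hDb)), red_sub (mul_mem hDa hGw) (mul_mem hFw hDb), red_mul hDa hGw,
    red_mul hFw hDb, red_mul hGz hGw, red_formDiff_of_mem_residueDisk ha hy hz hw hx,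
    red_formDiff_of_mem_residueDisk hb hy hz hw hx, red_formEval_of_mem_residueDisk ha hy hw hx,
    red_formEval_of_mem_residueDisk hb hy hz hx, red_formEval_of_mem_residueDisk hb hy hw hx,
    red_multiplier ha hb hx hy hc hc0, red_formEvalDx ha hx hy, red_formEvalDx hb hx hy,
    red_formEval ha hx hy, red_formEval hb hx hy]
  rw [red_formEval ha hx hy] at hFx
  rw [red_formEval hb hx hy] at hGx
  exact chart_derivative_eq_multiplier hy0 hc0 hFx hGx

theorem minimalPeriod_eq_one_or_of_semiconj {p : ℕ} (hp : 1 < p) [CharP (Residue pl) p]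
    (h : IsReducedFixedPt pl d a b x y c) (hy0 : red pl y ≠ 0) {ψ : P1 K → P1 K}
    {ι : K → P1 K} (hι : Injective ι)
    (hconj : ∀ z ∈ residueDisk pl x, ψ (ι z) = ι (chartMap d a b y z))
    (hpos : 0 < minimalPeriod ψ (ι x)) :
    minimalPeriod ψ (ι x) = 1 ∨ 0 < orderOf (red pl (multiplier d a b x y c)) ∧
      ∃ e, minimalPeriod ψ (ι x) = p ^ e * orderOf (red pl (multiplier d a b x y c)) := by
  have hx : x ∈ residueDisk pl x := ⟨h.mem_x, rfl⟩
  rw [minimalPeriod_eq_of_semiconj_on hι (h.mapsTo_chartMap hy0) hconj hx] at hpos ⊢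
  exact (h.hasDiffQuotientOn_chartMap hy0).minimalPeriod_eq_one_or hp hx hpos

theorem minimalPeriod_eq_one_or_of_isLift {p : ℕ} (hp : 1 < p) [CharP (Residue pl) p]
    (h : IsReducedFixedPt pl d a b x y c) (hxy : ¬(red pl x = 0 ∧ red pl y = 0))
    (hne : ¬(x = 0 ∧ y = 0)) {ψ : P1 K → P1 K}
    (hlift : ∀ (u v : K) (h : ¬(u = 0 ∧ v = 0)), ∃ h' : ¬(formEval d a u v = 0 ∧
      formEval d b u v = 0), ψ (P1.mk u v h) = P1.mk (formEval d a u v) (formEval d b u v) h')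
    (hpos : 0 < minimalPeriod ψ (P1.mk x y hne)) :
    minimalPeriod ψ (P1.mk x y hne) = 1 ∨ 0 < orderOf (red pl (multiplier d a b x y c)) ∧
      ∃ e, minimalPeriod ψ (P1.mk x y hne) = p ^ e * orderOf (red pl (multiplier d a b x y c)) := by
  rcases not_and_or.1 hxy with hx0 | hy0
  · rw [← multiplier_revc]
    refine h.swap.minimalPeriod_eq_one_or_of_semiconj hp hx0
      (P1.mk_right_injective (ne_zero_of_red_ne_zero hx0)) (fun z hz => ?_) hpos
    have hB := ne_zero_of_red_ne_zero (h.swap.red_formEval_ne_zero hx0 hz)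
    rw [formEval_revc] at hB
    obtain ⟨_, hψ⟩ := hlift x z _
    rw [hψ, P1.mk_eq_mk_iff, chartMap, formEval_revc, formEval_revc]
    field_simp
  · refine h.minimalPeriod_eq_one_or_of_semiconj hp hy0
      (P1.mk_left_injective (ne_zero_of_red_ne_zero hy0)) (fun z hz => ?_) hpos
    have hG := ne_zero_of_red_ne_zero (h.red_formEval_ne_zero hy0 hz)
    obtain ⟨_, hψ⟩ := hlift z y _
    rw [hψ, P1.mk_eq_mk_iff, chartMap]
    field_simp

end IsReducedFixedPt

end Chart

theorem charP_residue {pl : Place K} {p : ℕ} (hp : p.Prime)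
    (hres : (p : K) = 0 ∨ 0 < pl.v (p : K)) : CharP (Residue pl) p :=
  (CharP.charP_iff_prime_eq_zero hp).2 <| by
    rw [← red_natCast, red_eq_zero_iff (natCast_mem _ p)]
    exact hres

theorem red_pow_eq_one_iff {pl : Place K} {x : K} (hx : x ∈ integersAt pl) (r : ℕ) :
    red pl x ^ r = 1 ↔ x ^ r - 1 = 0 ∨ 0 < pl.v (x ^ r - 1) := by
  rw [← red_pow hx, ← red_one, red_eq_red_iff (pow_mem hx r) (one_mem _)]

theorem stmt19_general (K : Type) [Field K] (pl : Place K)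
    (p : ℕ) (hp : p.Prime) (hres : (p : K) = 0 ∨ 0 < pl.v (p : K))
    (φ : P1 K → P1 K)
    (hgood : GoodReduction pl φ)
    (P : P1 K) (hP : PeriodicPt φ P)
    (n : ℕ) (hn : n = Function.minimalPeriod φ P)
    -- `m`: the minimal period of the reduction of `P` modulo `𝔭`
    (m : ℕ) (hm0 : 0 < m) (hmfix : 0 < logDist pl (φ^[m] P) P)
    (hmmin : ∀ m', 0 < m' → m' < m → ¬ (0 < logDist pl (φ^[m'] P) P))
    -- an integral lift of `φ^m` with unit resultant
    (d : ℕ) (a b : Fin (d + 1) → K) (hlift : IsLift (φ^[m]) d a b)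
    (hia : ∀ i, 0 ≤ pl.v (a i)) (hib : ∀ i, 0 ≤ pl.v (b i))
    -- `𝔭`-coprime integral coordinates for `P`
    (x y : K) (hxy : ¬(x = 0 ∧ y = 0)) (hPxy : P = P1.mk x y hxy)
    (hxi : 0 ≤ pl.v x) (hyi : 0 ≤ pl.v y)
    (hcop : (x ≠ 0 ∧ pl.v x = 0) ∨ (y ≠ 0 ∧ pl.v y = 0))
    -- a unit scalar `c` with `(F(x,y), G(x,y)) ≡ c⬝(x,y) (mod 𝔭)`
    (c : K) (hc : c ≠ 0) (hcu : pl.v c = 0)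
    (hcx : formEval d a x y - c * x = 0 ∨ 0 < pl.v (formEval d a x y - c * x))
    (hcy : formEval d b x y - c * y = 0 ∨ 0 < pl.v (formEval d b x y - c * y)) :
    n = m ∨
      ∃ r : ℕ, 0 < r ∧
        (multiplier d a b x y c ^ r - 1 = 0 ∨ 0 < pl.v (multiplier d a b x y c ^ r - 1)) ∧
        (∀ r', 0 < r' → r' < r →
          ¬ (multiplier d a b x y c ^ r' - 1 = 0 ∨
              0 < pl.v (multiplier d a b x y c ^ r' - 1))) ∧
        (n = m * r ∨ ∃ e : ℕ, 1 ≤ e ∧ n = p ^ e * m * r) := by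
  obtain ⟨d', a', b', hlift', ha', hb', hres'⟩ := hgood
  obtain ⟨k, rfl⟩ : m ∣ n := hn ▸ dvd_minimalPeriod_of_equivalence
    (sameReduction_equivalence pl) (fun h => h.map_of_isLift hlift' ha' hb' hres') hm0 hmfix hmmin
  have hk : Function.minimalPeriod φ^[m] (P1.mk x y hxy) = k := by
    rw [← hPxy, Function.minimalPeriod_iterate_eq_div_gcd hm0.ne', ← hn,
      Nat.gcd_eq_right (dvd_mul_right m k), Nat.mul_div_cancel_left k hm0]
  have hkpos : 0 < k := Nat.pos_of_mul_pos_left (hn ▸ minimalPeriod_pos_of_mem_periodicPts hP)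
  have hc0 : red pl c ≠ 0 := (red_ne_zero_iff hcu.ge).2 ⟨hc, hcu⟩
  have hxy' : ¬(red pl x = 0 ∧ red pl y = 0) := by
    rw [not_and_or, ← ne_eq, ← ne_eq, red_ne_zero_iff hxi, red_ne_zero_iff hyi]
    exact hcop
  have := charP_residue hp hres
  have hΛ := multiplier_mem hia hib hxi hyi hcu.ge hc0
  have hfix := IsReducedFixedPt.of_valuation hia hib hxi hyi hcu.ge hc0 hcx hcy
  rcases hfix.minimalPeriod_eq_one_or_of_isLift hp.one_lt hxy' hxy hlift.2 (hk ▸ hkpos)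
    with h1 | ⟨hr, e, he⟩
  · exact Or.inl (by rw [← hk, h1, mul_one])
  refine Or.inr ⟨_, hr, (red_pow_eq_one_iff hΛ _).1 (pow_orderOf_eq_one _),
    fun r' hr' hlt h => pow_ne_one_of_lt_orderOf hr'.ne' hlt ((red_pow_eq_one_iff hΛ _).2 h), ?_⟩
  rw [hk] at he
  rcases Nat.eq_zero_or_pos e with rfl | he1
  · exact Or.inl (by rw [he, pow_zero, one_mul])
  · exact Or.inr ⟨e, he1, by rw [he]; ring⟩

/-- Theorem of Morton–Silverman and Zieve.  Let `K` be a global field,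
`𝔭` a non-archimedean place of `K` whose residue field has characteristic `p`, and `φ` an
endomorphism of `ℙ¹` of degree at least `2` defined over `K` with good reduction at `𝔭`.
Let `P ∈ ℙ¹(K)` be periodic for `φ` with minimal period `n`, let `m` be the minimal period
of the reduction of `P` modulo `𝔭` (the least `m ≥ 1` with `δ_𝔭(φ^m(P), P) > 0`, two
points having the same reduction iff `δ_𝔭 > 0`), and let `r` be the multiplicative order
of `(φ^m)'(P)` in `k(𝔭) \ {0}`.  Here `(φ^m)'(P)` modulo `𝔭` is the multiplier `Λ` of the
reduced point computed, via the trace formula `Λ = (F_x(x,y) + G_y(x,y) - d⬝c)/c`, from an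
integral lift `(F, G)` of `φ^m` with unit resultant, `𝔭`-coprime integral coordinates
`(x, y)` of `P`, and a unit scalar `c` with `F(x,y) ≡ c⬝x` and `G(x,y) ≡ c⬝y (mod 𝔭)`;
its multiplicative order `r` is the least `r ≥ 1` with `Λ^r ≡ 1 (mod 𝔭)` (`r = ∞`, i.e.
no such `r`, when `Λ ≡ 0`).  Then `n = m`, or `n = mr`, or `n = p^e·m·r` with `e ≥ 1`. -/
theorem stmt19 (K : Type) [Field K] (hK : IsGlobalField K) (pl : Place K)
    (p : ℕ) (hp : p.Prime) (hres : (p : K) = 0 ∨ 0 < pl.v (p : K))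
    (φ : P1 K → P1 K)
    (hdeg : ∃ (d₀ : ℕ) (a₀ b₀ : Fin (d₀ + 1) → K), 2 ≤ d₀ ∧ IsLift φ d₀ a₀ b₀)
    (hgood : GoodReduction pl φ)
    (P : P1 K) (hP : PeriodicPt φ P)
    (n : ℕ) (hn : n = Function.minimalPeriod φ P)
    -- `m`: the minimal period of the reduction of `P` modulo `𝔭`
    (m : ℕ) (hm0 : 0 < m) (hmfix : 0 < logDist pl (φ^[m] P) P)
    (hmmin : ∀ m', 0 < m' → m' < m → ¬ (0 < logDist pl (φ^[m'] P) P))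
    -- an integral lift of `φ^m` with unit resultant
    (d : ℕ) (a b : Fin (d + 1) → K) (hlift : IsLift (φ^[m]) d a b)
    (hia : ∀ i, 0 ≤ pl.v (a i)) (hib : ∀ i, 0 ≤ pl.v (b i))
    (hures : pl.v (resultant d a b) = 0)
    -- `𝔭`-coprime integral coordinates for `P`
    (x y : K) (hxy : ¬(x = 0 ∧ y = 0)) (hPxy : P = P1.mk x y hxy)
    (hxi : 0 ≤ pl.v x) (hyi : 0 ≤ pl.v y)
    (hcop : (x ≠ 0 ∧ pl.v x = 0) ∨ (y ≠ 0 ∧ pl.v y = 0))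
    -- a unit scalar `c` with `(F(x,y), G(x,y)) ≡ c⬝(x,y) (mod 𝔭)`
    (c : K) (hc : c ≠ 0) (hcu : pl.v c = 0)
    (hcx : formEval d a x y - c * x = 0 ∨ 0 < pl.v (formEval d a x y - c * x))
    (hcy : formEval d b x y - c * y = 0 ∨ 0 < pl.v (formEval d b x y - c * y)) :
    n = m ∨
      ∃ r : ℕ, 0 < r ∧
        (multiplier d a b x y c ^ r - 1 = 0 ∨ 0 < pl.v (multiplier d a b x y c ^ r - 1)) ∧
        (∀ r', 0 < r' → r' < r →
          ¬ (multiplier d a b x y c ^ r' - 1 = 0 ∨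
              0 < pl.v (multiplier d a b x y c ^ r' - 1))) ∧
        (n = m * r ∨ ∃ e : ℕ, 1 ≤ e ∧ n = p ^ e * m * r) :=
  stmt19_general K pl p hp hres φ hgood P hP n hn m hm0 hmfix hmmin d a b hlift hia hib x y hxy hPxy
    hxi hyi hcop c hc hcu hcx hcy

end ArxivPreper
end
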